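/- arXiv:2208.13367 — 12 statements merged into one kernel-verified Lean document; each statement's English description precedes it below -/
import Mathlib

section
/- Let Z, φ, I, I₀ be as in the context. Then φ is real analytic on I, φ(1) = 0, and φ(r) > 0 for all r ∈ I₀. Moreover φ satisfies the first-order equation (m+1)·r·Z(r)·φ'(r) + (m+1 − 2·Z(r))·φ(r) = 0 for all r ∈ I, and φ'(1) = −2. -/
open Polynomial Set Filter Topology

/-!
Along the ODE, `-Z' P̂(Z) = Q̂(Z) / r`, so on `I` the function `φ` equals
`2 (r² / Q̂(Z))^{1/(m+1)} Z`, whose base is positive and analytic.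
Reversing `Q' = (m+1) X P` gives `z Q̂'(z) = (m+1) (Q̂(z) - P̂(z))`; together with the ODE
this yields the closed form `φ' = 2 (r² / Q̂(Z))^{1/(m+1)} (2Z - (m+1)) / ((m+1) r)`, from
which the first-order equation and, since `P̂(0) = Q̂(0) = 1`, the value `φ'(1) = -2` follow.
-/

theorem AnalyticAt.rpow_const {f : ℝ → ℝ} {x : ℝ} (c : ℝ) (hf : AnalyticAt ℝ f x)
    (hx : 0 < f x) : AnalyticAt ℝ (fun y => f y ^ c) x := by
  have h : AnalyticAt ℝ (fun y => Real.exp (Real.log (f y) * c)) x :=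
    ((hf.log hx).mul analyticAt_const).rexp'
  refine h.congr ?_
  filter_upwards [hf.continuousAt.eventually (eventually_gt_nhds hx)] with y hy
  rw [Real.rpow_def_of_pos hy]

namespace Polynomial

theorem eq_reverse_of_eval_eq {K : Type*} [Field K] [Infinite K] {p q : K[X]}
    (h : ∀ x ≠ 0, q.eval x = x ^ p.natDegree * p.eval (1 / x)) : q = p.reverse := by
  refine eq_of_infinite_eval_eq _ _ ((Set.finite_singleton 0).infinite_compl.mono ?_)
  intro x (hx : x ≠ 0)
  let := invertibleOfNonzero (inv_ne_zero hx)
  have := eval₂_reverse_mul_pow (RingHom.id K) x⁻¹ p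
  simp only [invOf_eq_inv, inv_inv, eval₂_id] at this
  rw [Set.mem_ofPred_eq, h x hx, one_div, ← this, mul_left_comm, ← mul_pow,
    mul_inv_cancel₀ hx, one_pow, mul_one]

theorem mul_eval_derivative_of_eval_eq {𝕜 : Type*} [NontriviallyNormedField 𝕜] {p q : 𝕜[X]}
    {N : ℕ} (h : ∀ x ≠ 0, q.eval x = x ^ N * p.eval (1 / x)) {x : 𝕜} (hx : x ≠ 0) :
    x * q.derivative.eval x = N * q.eval x - x ^ N * p.derivative.eval (1 / x) / x := by
  have hq : (fun y => q.eval y) =ᶠ[𝓝 x] fun y => y ^ N * p.eval y⁻¹ := by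
    filter_upwards [eventually_ne_nhds hx] with y hy
    rw [h y hy, one_div]
  have hd : HasDerivAt (fun y => y ^ N * p.eval y⁻¹)
      (N * x ^ (N - 1) * p.eval x⁻¹ + x ^ N * (p.derivative.eval x⁻¹ * -(x ^ 2)⁻¹)) x :=
    (hasDerivAt_pow N x).mul ((p.hasDerivAt x⁻¹).comp x (hasDerivAt_inv hx))
  rw [← Polynomial.deriv, hq.deriv_eq, hd.deriv, h x hx]
  rcases N with _ | N
  · field_simp
    simp
  · simp only [pow_succ, one_div, Nat.add_sub_cancel]
    push_cast
    field_simp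
    ring

theorem mul_eval_derivative_eq_of_derivative_eq_X_mul {𝕜 : Type*} [NontriviallyNormedField 𝕜]
    {m : ℕ} (hm : 1 ≤ m) {P Q Phat Qhat : 𝕜[X]}
    (hQ : ∀ y, Q.derivative.eval y = (m + 1) * y * P.eval y)
    (hPhat : ∀ x ≠ 0, Phat.eval x = x ^ (m - 1) * P.eval (1 / x))
    (hQhat : ∀ x ≠ 0, Qhat.eval x = x ^ (m + 1) * Q.eval (1 / x)) (z : 𝕜) :
    z * Qhat.derivative.eval z = (m + 1) * (Qhat.eval z - Phat.eval z) := by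
  suffices X * derivative Qhat = C ((m : 𝕜) + 1) * (Qhat - Phat) by
    simpa using congr_arg (eval z) this
  refine eq_of_infinite_eval_eq _ _ ((Set.finite_singleton 0).infinite_compl.mono ?_)
  intro x (hx : x ≠ 0)
  obtain ⟨k, rfl⟩ : ∃ k, m = k + 1 := ⟨m - 1, by omega⟩
  simp only [Set.mem_ofPred_eq, eval_mul, eval_X, eval_C, eval_sub,
    mul_eval_derivative_of_eval_eq hQhat hx, hQ, hPhat x hx, hQhat x hx, Nat.add_sub_cancel]
  push_cast
  field_simp
  ring

end Polynomial

section

variable {n : ℝ} {p q : ℝ[X]} {Z : ℝ → ℝ} {r z' : ℝ}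

theorem div_neg_mul_eval_eq_sq_div (hODE : r * z' * p.eval (Z r) + q.eval (Z r) = 0)
    (hr : r ≠ 0) : r / (-z' * p.eval (Z r)) = r ^ 2 / q.eval (Z r) := by
  rw [← neg_eq_of_add_eq_zero_right hODE]
  field_simp

theorem hasDerivAt_two_mul_rpow_mul_of_ode
    (hq : ∀ z, z * q.derivative.eval z = n * (q.eval z - p.eval z)) (hn : n ≠ 0)
    (hZ : HasDerivAt Z z' r) (hODE : r * z' * p.eval (Z r) + q.eval (Z r) = 0)
    (hr : 0 < r) (hqZ : 0 < q.eval (Z r)) :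
    HasDerivAt (fun s => 2 * (s ^ 2 / q.eval (Z s)) ^ (1 / n) * Z s)
      (2 * (r ^ 2 / q.eval (Z r)) ^ (1 / n) * (2 * Z r - n) / (n * r)) r := by
  have hsq : HasDerivAt (fun s : ℝ => s ^ 2) (2 * r) r := by simpa using hasDerivAt_pow 2 r
  have hqZ' : HasDerivAt (fun s => q.eval (Z s)) (q.derivative.eval (Z r) * z') r :=
    (q.hasDerivAt _).comp r hZ
  have hB : HasDerivAt (fun s => s ^ 2 / q.eval (Z s))
      ((2 * r * q.eval (Z r) - r ^ 2 * (q.derivative.eval (Z r) * z')) / q.eval (Z r) ^ 2) r :=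
    hsq.div hqZ' hqZ.ne'
  have hBpos : 0 < r ^ 2 / q.eval (Z r) := by positivity
  refine (((hB.rpow_const (Or.inl hBpos.ne')).const_mul 2).mul hZ).congr_deriv ?_
  rw [Real.rpow_sub_one hBpos.ne']
  have := hq (Z r)
  field_simp
  linear_combination (-r * z') * this + n * hODE

theorem analyticAt_two_mul_rpow_mul (c : ℝ) (hZ : AnalyticAt ℝ Z r) (hr : r ≠ 0)
    (hqZ : 0 < q.eval (Z r)) :
    AnalyticAt ℝ (fun s => 2 * (s ^ 2 / q.eval (Z s)) ^ c * Z s) r := by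
  have hqZan : AnalyticAt ℝ (fun s => q.eval (Z s)) r := by
    simpa only [coe_aeval_eq_eval] using hZ.aeval_polynomial q
  have hB : AnalyticAt ℝ (fun s => s ^ 2 / q.eval (Z s)) r :=
    (analyticAt_id.pow 2).div hqZan hqZ.ne'
  exact (analyticAt_const.mul (hB.rpow_const c (by positivity))).mul hZ

end

/-- properties of φ built from the ODE solution Z. -/
theorem stmt_0 (m : ℕ) (hm : 2 ≤ m)
    (P Q Phat Qhat : Polynomial ℝ)
    (hPmon : P.Monic) (hPdeg : P.natDegree = m - 1)
    (hQ : ∀ y : ℝ, (derivative Q).eval y = ((m : ℝ) + 1) * y * P.eval y)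
    (hPhat : ∀ x : ℝ, x ≠ 0 → Phat.eval x = x ^ (m - 1) * P.eval (1 / x))
    (hQhat : ∀ x : ℝ, x ≠ 0 → Qhat.eval x = x ^ (m + 1) * Q.eval (1 / x))
    (a b : ℝ) (ha : 0 ≤ a) (h1 : (1 : ℝ) ∈ Ioo a b)
    (Z : ℝ → ℝ) (hZan : AnalyticOnNhd ℝ Z (Ioo a b))
    (hODE : ∀ r ∈ Ioo a b, r * deriv Z r * Phat.eval (Z r) + Qhat.eval (Z r) = 0)
    (hZ1 : Z 1 = 0)
    (hZ' : ∀ r ∈ Ioo a b, deriv Z r < 0)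
    (hPZ : ∀ r ∈ Ioo a b, 0 < Phat.eval (Z r))
    (hZpos : ∀ r ∈ Ioo a b ∩ Ioo (0 : ℝ) 1, 0 < Z r)
    (φ : ℝ → ℝ)
    (hφ : ∀ r : ℝ, φ r =
      2 * (r / (-(deriv Z r) * Phat.eval (Z r))) ^ (1 / ((m : ℝ) + 1)) * Z r) :
    AnalyticOnNhd ℝ φ (Ioo a b) ∧ φ 1 = 0 ∧
      (∀ r ∈ Ioo a b ∩ Ioo (0 : ℝ) 1, 0 < φ r) ∧
      (∀ r ∈ Ioo a b,
        ((m : ℝ) + 1) * r * Z r * deriv φ r + ((m : ℝ) + 1 - 2 * Z r) * φ r = 0) ∧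
      deriv φ 1 = -2 := by
  have hpos : ∀ r ∈ Ioo a b, 0 < r := fun r hr => ha.trans_lt hr.1
  have hbase : ∀ r ∈ Ioo a b, 0 < -deriv Z r * Phat.eval (Z r) := fun r hr =>
    mul_pos (neg_pos.2 (hZ' r hr)) (hPZ r hr)
  have hQZ : ∀ r ∈ Ioo a b, 0 < Qhat.eval (Z r) := fun r hr => by
    nlinarith [hODE r hr, mul_pos (hpos r hr) (hbase r hr)]
  have hQhat' := mul_eval_derivative_eq_of_derivative_eq_X_mul (by omega) hQ hPhat hQhat
  have hPhat0 : Phat.eval 0 = 1 := by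
    rw [← coeff_zero_eq_eval_zero, eq_reverse_of_eval_eq (q := Phat) (by rwa [hPdeg]),
      coeff_zero_reverse, hPmon.leadingCoeff]
  have hQhat0 : Qhat.eval 0 = 1 := by
    have := hQhat' 0
    rw [zero_mul, hPhat0, zero_eq_mul, sub_eq_zero] at this
    exact this.resolve_left (by positivity)
  have hφψ : ∀ r ∈ Ioo a b,
      φ =ᶠ[𝓝 r] fun s => 2 * (s ^ 2 / Qhat.eval (Z s)) ^ (1 / ((m : ℝ) + 1)) * Z s :=
    fun r hr => eventually_of_mem (isOpen_Ioo.mem_nhds hr) fun s hs => by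
      rw [hφ s, div_neg_mul_eval_eq_sq_div (hODE s hs) (hpos s hs).ne']
  have hφ' : ∀ r ∈ Ioo a b, HasDerivAt φ
      (2 * (r ^ 2 / Qhat.eval (Z r)) ^ (1 / ((m : ℝ) + 1)) * (2 * Z r - (m + 1)) / ((m + 1) * r))
      r := fun r hr =>
    (hasDerivAt_two_mul_rpow_mul_of_ode hQhat' (by positivity)
      (hZan r hr).differentiableAt.hasDerivAt (hODE r hr) (hpos r hr)
      (hQZ r hr)).congr_of_eventuallyEq (hφψ r hr)
  refine ⟨fun r hr => ?_, by rw [hφ 1, hZ1, mul_zero], fun r hr => ?_, fun r hr => ?_, ?_⟩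
  · exact (analyticAt_two_mul_rpow_mul _ (hZan r hr) (hpos r hr).ne' (hQZ r hr)).congr
      (hφψ r hr).symm
  · rw [hφ r]
    have := div_pos (hpos r hr.1) (hbase r hr.1)
    have := hZpos r hr
    positivity
  · have := (hpos r hr).ne'
    rw [(hφ' r hr).deriv, (hφψ r hr).eq_of_nhds]
    field_simp
    ring
  · rw [(hφ' 1 h1).deriv, hZ1, hQhat0]
    field_simp
    norm_num
end

section
/- There exist an open interval I ⊆ (0,∞) containing 1 and a real analytic function Z : I → ℝ such that r·Z'(r)·P̂(Z(r)) + Q̂(Z(r)) = 0 for all r ∈ I and Z(1) = 0; any such Z satisfies Z'(1) = −1; and I and Z can be chosen so that in addition Z'(r) < 0 and P̂(Z(r)) > 0 for all r ∈ I, and Z(r) > 0 for all r ∈ I ∩ (0,1). -/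
/-!
With `g = P̂ / Q̂`, the equation `r Z' P̂(Z) + Q̂(Z) = 0` says that `r`, viewed as a function of
`y = Z(r)`, solves `dr/dy = -g(y) r`; hence `r = Φ(y) := exp (-∫₀ʸ g)`. Since `P̂` and `Q̂` are the
reversals of the monic polynomials `P` and `Q`, `P̂(0) = Q̂(0) = 1`, so `g` is analytic at `0` with
`g(0) = 1`, its antiderivative is given by termwise integration of its power series, and
`Φ(0) = 1`, `Φ'(0) = -1`. The analytic inverse function theorem then yields `Z = Φ⁻¹` near `1`.
The sign conditions hold near `1` by continuity, and `Z'(1) = -1` is the equation at `r = 1`.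
-/

open Polynomial Set Filter Topology

namespace Polynomial

variable {K : Type*} [Field K]

theorem eval_reverse_of_ne_zero (R : K[X]) {x : K} (hx : x ≠ 0) :
    R.reverse.eval x = x ^ R.natDegree * R.eval (1 / x) := by
  let := invertibleOfNonzero (inv_ne_zero hx)
  have h := eval₂_reverse_mul_pow (RingHom.id K) x⁻¹ R
  rw [invOf_eq_inv, inv_inv, eval₂_id, eval₂_id] at h
  rw [one_div, ← h, mul_left_comm, ← mul_pow, mul_inv_cancel₀ hx,
    one_pow, mul_one]

theorem eq_reverse_of_eval_eq_s1 [Infinite K] {R S : K[X]}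
    (h : ∀ x : K, x ≠ 0 → S.eval x = x ^ R.natDegree * R.eval (1 / x)) : S = R.reverse :=
  eq_of_infinite_eval_eq S R.reverse <| (finite_singleton (0 : K)).infinite_compl.mono
    fun x hx => (h x hx).trans (R.eval_reverse_of_ne_zero hx).symm

theorem Monic.eval_zero_of_eval_eq [Infinite K] {R S : K[X]} (hR : R.Monic)
    (h : ∀ x : K, x ≠ 0 → S.eval x = x ^ R.natDegree * R.eval (1 / x)) : S.eval 0 = 1 := by
  rw [eq_reverse_of_eval_eq_s1 h, ← coeff_zero_eq_eval_zero, coeff_zero_reverse, hR.leadingCoeff]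

theorem monic_of_derivative_eq_C_mul [CharZero K] {R Q : K[X]} (hR : R.Monic)
    (hQ : derivative Q = C ((R.natDegree : K) + 1) * R) :
    Q.Monic ∧ Q.natDegree = R.natDegree + 1 := by
  have hc : ((R.natDegree : K) + 1) ≠ 0 := by exact_mod_cast R.natDegree.succ_ne_zero
  have hcoeff : Q.coeff (R.natDegree + 1) = 1 := by
    have h := coeff_derivative Q R.natDegree
    rw [hQ, coeff_C_mul, coeff_natDegree, hR.leadingCoeff, mul_one] at h
    exact (mul_eq_right₀ hc).mp h.symm
  have hdeg : Q.natDegree = R.natDegree + 1 := by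
    refine natDegree_eq_of_le_of_coeff_ne_zero ?_ (by simp [hcoeff])
    have h := natDegree_derivative Q
    rw [hQ, natDegree_C_mul hc] at h
    omega
  exact ⟨by rw [Monic, leadingCoeff, hdeg, hcoeff], hdeg⟩

end Polynomial

namespace FormalMultilinearSeries

variable {𝕜 : Type*} [RCLike 𝕜] (p : FormalMultilinearSeries 𝕜 𝕜 𝕜)

noncomputable def antiderivCoeff : ℕ → 𝕜
  | 0 => 0
  | k + 1 => p.coeff k / (k + 1)

theorem norm_antiderivCoeff_succ_le (k : ℕ) : ‖p.antiderivCoeff (k + 1)‖ ≤ ‖p.coeff k‖ := by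
  rw [antiderivCoeff, norm_div]
  refine div_le_self (norm_nonneg _) ?_
  rw [← Nat.cast_add_one, RCLike.norm_natCast]
  exact_mod_cast Nat.le_add_left 1 k

theorem radius_le_radius_ofScalars_antiderivCoeff :
    p.radius ≤ (ofScalars 𝕜 p.antiderivCoeff).radius := by
  rw [← radius_shift (ofScalars 𝕜 p.antiderivCoeff)]
  refine radius_le_of_le fun n => ?_
  rw [shift, ContinuousMultilinearMap.curryRight_norm, ofScalars_norm, norm_apply_eq_norm_coef]
  exact p.norm_antiderivCoeff_succ_le n

theorem derivSeries_ofScalars_antiderivCoeff_apply (n : ℕ) (y : 𝕜) :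
    (ofScalars 𝕜 p.antiderivCoeff).derivSeries n (fun _ => y) 1 = p n (fun _ => y) := by
  rw [apply_eq_pow_smul_coeff, apply_eq_pow_smul_coeff, _root_.smul_apply,
    derivSeries_coeff_one, coeff_ofScalars, antiderivCoeff, nsmul_eq_mul, Nat.cast_add_one,
    mul_div_cancel₀ _ (by exact_mod_cast n.succ_ne_zero)]

theorem hasFPowerSeriesOnBall_ofScalarsSum_antiderivCoeff {r : ENNReal} (hr : 0 < r)
    (hrp : r ≤ p.radius) :
    HasFPowerSeriesOnBall (ofScalarsSum p.antiderivCoeff) (ofScalars 𝕜 p.antiderivCoeff) 0 r :=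
  ((ofScalars 𝕜 p.antiderivCoeff).hasFPowerSeriesOnBall
    (hr.trans_le (hrp.trans p.radius_le_radius_ofScalars_antiderivCoeff))).mono hr
    (hrp.trans p.radius_le_radius_ofScalars_antiderivCoeff)

end FormalMultilinearSeries

namespace HasFPowerSeriesOnBall

open FormalMultilinearSeries

variable {𝕜 : Type*} [RCLike 𝕜] {g : 𝕜 → 𝕜} {p : FormalMultilinearSeries 𝕜 𝕜 𝕜} {r : ENNReal}

theorem hasDerivAt_ofScalarsSum_antiderivCoeff (hg : HasFPowerSeriesOnBall g p 0 r) {y : 𝕜}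
    (hy : y ∈ Metric.eball 0 r) : HasDerivAt (ofScalarsSum p.antiderivCoeff) (g y) y := by
  have hF := p.hasFPowerSeriesOnBall_ofScalarsSum_antiderivCoeff hg.r_pos hg.r_le
  have hsum := (hF.fderiv.hasSum hy).mapL (ContinuousLinearMap.apply 𝕜 𝕜 (1 : 𝕜))
  simp only [ContinuousLinearMap.apply_apply, derivSeries_ofScalars_antiderivCoeff_apply,
    zero_add] at hsum
  have hgy := hg.hasSum hy
  rw [zero_add] at hgy
  rw [hgy.unique hsum, fderiv_apply_one_eq_deriv]
  exact (hF.analyticAt_of_mem hy).differentiableAt.hasDerivAt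

end HasFPowerSeriesOnBall

theorem AnalyticAt.exists_eventually_hasDerivAt {𝕜 : Type*} [RCLike 𝕜] {g : 𝕜 → 𝕜}
    (hg : AnalyticAt 𝕜 g 0) :
    ∃ F : 𝕜 → 𝕜, AnalyticAt 𝕜 F 0 ∧ F 0 = 0 ∧ ∀ᶠ y in 𝓝 0, HasDerivAt F (g y) y := by
  obtain ⟨p, r, hg⟩ := hg
  refine ⟨_, (p.hasFPowerSeriesOnBall_ofScalarsSum_antiderivCoeff hg.r_pos hg.r_le).analyticAt, by
    simp [FormalMultilinearSeries.antiderivCoeff], ?_⟩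
  filter_upwards [Metric.eball_mem_nhds 0 hg.r_pos] with y hy
  exact hg.hasDerivAt_ofScalarsSum_antiderivCoeff hy

theorem AnalyticAt.exists_analyticAt_mul_deriv_mul_comp_eq_neg_one {g : ℝ → ℝ}
    (hg : AnalyticAt ℝ g 0) (hg0 : g 0 ≠ 0) :
    ∃ Z : ℝ → ℝ, Z 1 = 0 ∧ ∀ᶠ r in 𝓝 1, AnalyticAt ℝ Z r ∧ r * deriv Z r * g (Z r) = -1 := by
  obtain ⟨F, hFa, hF0, hF⟩ := hg.exists_eventually_hasDerivAt
  set Φ : ℝ → ℝ := fun y => Real.exp (-F y)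
  have hΦa : AnalyticAt ℝ Φ 0 := hFa.neg.rexp
  have hΦ0 : Φ 0 = 1 := by simp [Φ, hF0]
  have hΦ : ∀ᶠ y in 𝓝 0, HasDerivAt Φ (-g y * Φ y) y := by
    filter_upwards [hF] with y hy
    simpa [Φ, mul_comm] using hy.neg.exp
  have hΦ'0 : deriv Φ 0 ≠ 0 := by simpa [hΦ.self_of_nhds.deriv, hΦ0] using hg0
  set Z := hΦa.hasStrictDerivAt.localInverse Φ (deriv Φ 0) 0 hΦ'0
  have hZa : AnalyticAt ℝ Z 1 := hΦ0 ▸ hΦa.analyticAt_localInverse hΦ'0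
  have hZ1 : Z 1 = 0 := hΦ0 ▸ (HasStrictDerivAt.eventually_left_inverse ..).self_of_nhds
  have hΦZ : ∀ᶠ r in 𝓝 1, Φ (Z r) = r := hΦ0 ▸ HasStrictDerivAt.eventually_right_inverse ..
  have hZlim : Tendsto Z (𝓝 1) (𝓝 0) := hZ1 ▸ hZa.continuousAt.tendsto
  refine ⟨Z, hZ1, ?_⟩
  filter_upwards [hZa.eventually_analyticAt, hΦZ.eventually_nhds, hZlim.eventually hΦ]
    with r hZr hΦZr hΦr
  have hcomp := hΦr.comp r hZr.differentiableAt.hasDerivAt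
  have hid : HasDerivAt (Φ ∘ Z) 1 r := (hasDerivAt_id r).congr_of_eventuallyEq hΦZr
  rw [hΦZr.self_of_nhds] at hcomp
  refine ⟨hZr, ?_⟩
  linear_combination -hcomp.unique hid

theorem exists_analyticOnNhd_solution_near_one {p q : ℝ → ℝ} (hp : AnalyticAt ℝ p 0)
    (hq : AnalyticAt ℝ q 0) (hp0 : 0 < p 0) (hq0 : 0 < q 0) :
    ∃ a b : ℝ, 0 ≤ a ∧ (1 : ℝ) ∈ Ioo a b ∧ ∃ Z : ℝ → ℝ,
      AnalyticOnNhd ℝ Z (Ioo a b) ∧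
      (∀ r ∈ Ioo a b, r * deriv Z r * p (Z r) + q (Z r) = 0) ∧
      Z 1 = 0 ∧
      (∀ r ∈ Ioo a b, deriv Z r < 0) ∧
      (∀ r ∈ Ioo a b, 0 < p (Z r)) ∧
      (∀ r ∈ Ioo a b ∩ Ioo (0 : ℝ) 1, 0 < Z r) := by
  obtain ⟨Z, hZ1, hZ⟩ := (hp.div hq hq0.ne').exists_analyticAt_mul_deriv_mul_comp_eq_neg_one
    (div_pos hp0 hq0).ne'
  have hZlim : Tendsto Z (𝓝 1) (𝓝 0) := hZ1 ▸ hZ.self_of_nhds.1.continuousAt.tendsto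
  have hnear : ∀ᶠ r in 𝓝 (1 : ℝ), 0 < r ∧ (AnalyticAt ℝ Z r ∧
      r * deriv Z r * (p (Z r) / q (Z r)) = -1) ∧ 0 < p (Z r) ∧ 0 < q (Z r) :=
    (lt_mem_nhds one_pos).and <| hZ.and <| hZlim.eventually <|
      (continuousAt_const.eventually_lt hp.continuousAt hp0).and
      (continuousAt_const.eventually_lt hq.continuousAt hq0)
  obtain ⟨a, b, h1, hab⟩ := mem_nhds_iff_exists_Ioo_subset.mp hnear
  have ha : 0 ≤ a := le_of_not_gt fun ha => lt_irrefl 0 (hab ⟨ha, one_pos.trans h1.2⟩).1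
  have hODE : ∀ r ∈ Ioo a b, r * deriv Z r * p (Z r) + q (Z r) = 0 := by
    intro r hr
    obtain ⟨-, ⟨-, h⟩, -, hqr⟩ := hab hr
    field_simp at h
    linarith
  have hderiv : ∀ r ∈ Ioo a b, deriv Z r < 0 := by
    intro r hr
    obtain ⟨hr0, -, hpr, hqr⟩ := hab hr
    have h : r * deriv Z r * p (Z r) < 0 := by linarith [hODE r hr]
    exact neg_of_mul_neg_right (neg_of_mul_neg_left h hpr.le) hr0.le
  have hanti : StrictAntiOn Z (Ioo a b) :=
    strictAntiOn_of_deriv_neg (convex_Ioo a b)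
      (fun r hr => (hab hr).2.1.1.continuousAt.continuousWithinAt)
      (by rwa [interior_Ioo])
  refine ⟨a, b, ha, h1, Z, fun r hr => (hab hr).2.1.1, hODE, hZ1, hderiv,
    fun r hr => (hab hr).2.2.1, fun r ⟨hr, hr1⟩ => ?_⟩
  simpa [hZ1] using hanti hr h1 hr1.2

/-- existence of a real analytic solution Z near r = 1,
the normalization Z'(1) = -1 for any solution, and the possibility to
choose I and Z with the additional sign conditions. -/
theorem stmt_1 (m : ℕ) (hm : 2 ≤ m)
    (P Q Phat Qhat : Polynomial ℝ)
    (hPmon : P.Monic) (hPdeg : P.natDegree = m - 1)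
    (hQ : ∀ y : ℝ, (derivative Q).eval y = ((m : ℝ) + 1) * y * P.eval y)
    (hPhat : ∀ x : ℝ, x ≠ 0 → Phat.eval x = x ^ (m - 1) * P.eval (1 / x))
    (hQhat : ∀ x : ℝ, x ≠ 0 → Qhat.eval x = x ^ (m + 1) * Q.eval (1 / x)) :
    (∃ a b : ℝ, 0 ≤ a ∧ (1 : ℝ) ∈ Ioo a b ∧ ∃ Z : ℝ → ℝ,
      AnalyticOnNhd ℝ Z (Ioo a b) ∧
      (∀ r ∈ Ioo a b, r * deriv Z r * Phat.eval (Z r) + Qhat.eval (Z r) = 0) ∧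
      Z 1 = 0 ∧
      (∀ r ∈ Ioo a b, deriv Z r < 0) ∧
      (∀ r ∈ Ioo a b, 0 < Phat.eval (Z r)) ∧
      (∀ r ∈ Ioo a b ∩ Ioo (0 : ℝ) 1, 0 < Z r)) ∧
    (∀ a b : ℝ, 0 ≤ a → (1 : ℝ) ∈ Ioo a b → ∀ Z : ℝ → ℝ,
      AnalyticOnNhd ℝ Z (Ioo a b) →
      (∀ r ∈ Ioo a b, r * deriv Z r * Phat.eval (Z r) + Qhat.eval (Z r) = 0) →
      Z 1 = 0 → deriv Z 1 = -1) := by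
  have hXP : (X * P).Monic ∧ (X * P).natDegree = m := by
    refine ⟨monic_X.mul hPmon, ?_⟩
    rw [natDegree_X_mul hPmon.ne_zero, hPdeg]
    omega
  have hQmon : Q.Monic ∧ Q.natDegree = m + 1 := by
    have hQ' : derivative Q = C (((X * P).natDegree : ℝ) + 1) * (X * P) :=
      Polynomial.funext fun y => by simp [hQ, hXP.2, mul_assoc]
    rw [← hXP.2]
    exact monic_of_derivative_eq_C_mul hXP.1 hQ'
  have hP0 : Phat.eval 0 = 1 := hPmon.eval_zero_of_eval_eq (hPdeg ▸ hPhat)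
  have hQ0 : Qhat.eval 0 = 1 := hQmon.1.eval_zero_of_eval_eq (hQmon.2 ▸ hQhat)
  refine ⟨exists_analyticOnNhd_solution_near_one
    (AnalyticOnNhd.eval_polynomial Phat 0 (mem_univ 0))
    (AnalyticOnNhd.eval_polynomial Qhat 0 (mem_univ 0)) (by simp [hP0]) (by simp [hQ0]), ?_⟩
  intro a b _ h1 Z _ hODE hZ1
  have h := hODE 1 h1
  rw [hZ1, hP0, hQ0] at h
  linarith
end

section
/- Let Z, I₀ be as in the context. Then for all r ∈ I₀, r·(d/dr)[Z'(r)·Z(r)^{−(m+1)}·P̂(Z(r))] = (m+1)·Z'(r)·Z(r)^{−(m+2)}·P̂(Z(r)) − Z'(r)·Z(r)^{−(m+1)}·P̂(Z(r)); equivalently, r·(d/dr)[Z'·Z^{−(m+1)}·P̂(Z)] / (Z'·Z^{−(m+1)}·P̂(Z)) = −1 + (m+1)·Z(r)^{−1} on I₀. -/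
open Polynomial Set Filter

/-!
Dividing the ODE `r Z' P̂(Z) = -Q̂(Z) = -Z^{m+1} Q(1/Z)` by `r Z^{m+1}` shows that
`F = Z' Z^{-(m+1)} P̂(Z)` equals `-Q(1/Z)/r` wherever `Z > 0`. Differentiating this closed form,
`r F' = Q'(1/Z) Z'/Z² - F`, and `Q'(1/Z) = (m+1) Z^{-1} P(1/Z) = (m+1) Z^{-m} P̂(Z)` gives the
identity; the second form follows on dividing by `F ≠ 0`.
-/

lemma zpow_neg_natCast_add_one {α : Type*} [DivisionRing α] (x : α) (m : ℕ) :
    x ^ (-((m : ℤ) + 1)) = (x ^ (m + 1))⁻¹ := by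
  rw [zpow_neg, ← zpow_natCast]
  push_cast
  rfl

lemma zpow_neg_natCast_add_two {α : Type*} [DivisionRing α] (x : α) (m : ℕ) :
    x ^ (-((m : ℤ) + 2)) = (x ^ (m + 2))⁻¹ := by
  rw [zpow_neg, ← zpow_natCast]
  push_cast
  rfl

lemma mul_zpow_mul_eval_eq_neg_eval_inv_div {m : ℕ} {P Q Qhat : ℝ[X]} {s x z' : ℝ}
    (hs : s ≠ 0) (hx : x ≠ 0) (hQhat : Qhat.eval x = x ^ (m + 1) * Q.eval (1 / x))
    (hODE : s * z' * P.eval x + Qhat.eval x = 0) :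
    z' * x ^ (-((m : ℤ) + 1)) * P.eval x = -Q.eval x⁻¹ / s := by
  rw [zpow_neg_natCast_add_one, ← one_div]
  field_simp
  linear_combination hODE - hQhat

lemma hasDerivAt_neg_eval_inv_div (Q : ℝ[X]) {Z : ℝ → ℝ} {z' r : ℝ} (hZ : HasDerivAt Z z' r)
    (hZr : Z r ≠ 0) (hr : r ≠ 0) :
    HasDerivAt (fun s => -Q.eval (Z s)⁻¹ / s)
      (((derivative Q).eval (Z r)⁻¹ * z' / Z r ^ 2 + Q.eval (Z r)⁻¹ / r) / r) r := by
  have h := ((Q.hasDerivAt _).comp r (hZ.inv hZr)).neg.div (hasDerivAt_id r) hr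
  refine h.congr_deriv ?_
  simp only [Pi.neg_apply, Function.comp_apply, Pi.inv_apply, id]
  field_simp
  ring

lemma eval_derivative_inv_mul_div_sq {m : ℕ} (hm : 1 ≤ m) {P Q Phat : ℝ[X]} {x : ℝ} (z' : ℝ)
    (hx : x ≠ 0) (hQ : ∀ y : ℝ, (derivative Q).eval y = ((m : ℝ) + 1) * y * P.eval y)
    (hPhat : Phat.eval x = x ^ (m - 1) * P.eval (1 / x)) :
    (derivative Q).eval x⁻¹ * z' / x ^ 2 =
      ((m : ℝ) + 1) * z' * x ^ (-((m : ℤ) + 2)) * Phat.eval x := by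
  obtain ⟨k, rfl⟩ : ∃ k, m = k + 1 := ⟨m - 1, by omega⟩
  rw [zpow_neg_natCast_add_two, hPhat, hQ, Nat.add_sub_cancel, one_div]
  field_simp
  ring

theorem stmt_2_general (m : ℕ) (hm : 2 ≤ m)
    (P Q Phat Qhat : Polynomial ℝ)
    (hQ : ∀ y : ℝ, (derivative Q).eval y = ((m : ℝ) + 1) * y * P.eval y)
    (hPhat : ∀ x : ℝ, x ≠ 0 → Phat.eval x = x ^ (m - 1) * P.eval (1 / x))
    (hQhat : ∀ x : ℝ, x ≠ 0 → Qhat.eval x = x ^ (m + 1) * Q.eval (1 / x))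
    (a b : ℝ)
    (Z : ℝ → ℝ) (hZan : AnalyticOnNhd ℝ Z (Ioo a b))
    (hODE : ∀ r ∈ Ioo a b, r * deriv Z r * Phat.eval (Z r) + Qhat.eval (Z r) = 0)
    (hZ' : ∀ r ∈ Ioo a b, deriv Z r < 0)
    (hPZ : ∀ r ∈ Ioo a b, 0 < Phat.eval (Z r))
    (hZpos : ∀ r ∈ Ioo a b ∩ Ioo (0 : ℝ) 1, 0 < Z r) :
    ∀ r ∈ Ioo a b ∩ Ioo (0 : ℝ) 1,
      (r * deriv (fun s => deriv Z s * Z s ^ (-((m : ℤ) + 1)) * Phat.eval (Z s)) r =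
        ((m : ℝ) + 1) * deriv Z r * Z r ^ (-((m : ℤ) + 2)) * Phat.eval (Z r)
          - deriv Z r * Z r ^ (-((m : ℤ) + 1)) * Phat.eval (Z r)) ∧
      (r * deriv (fun s => deriv Z s * Z s ^ (-((m : ℤ) + 1)) * Phat.eval (Z s)) r /
          (deriv Z r * Z r ^ (-((m : ℤ) + 1)) * Phat.eval (Z r)) =
        -1 + ((m : ℝ) + 1) * (Z r)⁻¹) := by
  intro r hr
  set F := fun s => deriv Z s * Z s ^ (-((m : ℤ) + 1)) * Phat.eval (Z s)
  have hr0 : r ≠ 0 := hr.2.1.ne'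
  have hZr : Z r ≠ 0 := (hZpos r hr).ne'
  have hZ'r : deriv Z r ≠ 0 := (hZ' r hr.1).ne
  have hPZr : Phat.eval (Z r) ≠ 0 := (hPZ r hr.1).ne'
  have hF : ∀ s ∈ Ioo a b ∩ Ioo 0 1, F s = -Q.eval (Z s)⁻¹ / s := fun s hs =>
    mul_zpow_mul_eval_eq_neg_eval_inv_div hs.2.1.ne' (hZpos s hs).ne' (hQhat _ (hZpos s hs).ne')
      (hODE s hs.1)
  have hderiv : r * deriv F r =
      ((m : ℝ) + 1) * deriv Z r * Z r ^ (-((m : ℤ) + 2)) * Phat.eval (Z r) - F r := by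
    have hFr : F =ᶠ[nhds r] fun s => -Q.eval (Z s)⁻¹ / s :=
      eventuallyEq_of_mem ((isOpen_Ioo.inter isOpen_Ioo).mem_nhds hr) hF
    rw [hFr.deriv_eq, (hasDerivAt_neg_eval_inv_div Q (hZan r hr.1).differentiableAt.hasDerivAt
      hZr hr0).deriv, ← eval_derivative_inv_mul_div_sq (by omega) _ hZr hQ (hPhat _ hZr), hF r hr]
    field_simp
    ring
  refine ⟨hderiv, ?_⟩
  rw [hderiv, sub_div, div_self (by simp only [F]; positivity)]
  simp only [zpow_neg_natCast_add_one, zpow_neg_natCast_add_two]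
  field_simp
  ring

/-- Lemma 3.3 of the paper: the logarithmic-derivative identity
for Z'·Z^{-(m+1)}·P̂(Z) on I₀ = I ∩ (0,1). -/
theorem stmt_2 (m : ℕ) (hm : 2 ≤ m)
    (P Q Phat Qhat : Polynomial ℝ)
    (hPmon : P.Monic) (hPdeg : P.natDegree = m - 1)
    (hQ : ∀ y : ℝ, (derivative Q).eval y = ((m : ℝ) + 1) * y * P.eval y)
    (hPhat : ∀ x : ℝ, x ≠ 0 → Phat.eval x = x ^ (m - 1) * P.eval (1 / x))
    (hQhat : ∀ x : ℝ, x ≠ 0 → Qhat.eval x = x ^ (m + 1) * Q.eval (1 / x))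
    (a b : ℝ) (ha : 0 ≤ a) (h1 : (1 : ℝ) ∈ Ioo a b)
    (Z : ℝ → ℝ) (hZan : AnalyticOnNhd ℝ Z (Ioo a b))
    (hODE : ∀ r ∈ Ioo a b, r * deriv Z r * Phat.eval (Z r) + Qhat.eval (Z r) = 0)
    (hZ1 : Z 1 = 0)
    (hZ' : ∀ r ∈ Ioo a b, deriv Z r < 0)
    (hPZ : ∀ r ∈ Ioo a b, 0 < Phat.eval (Z r))
    (hZpos : ∀ r ∈ Ioo a b ∩ Ioo (0 : ℝ) 1, 0 < Z r) :
    ∀ r ∈ Ioo a b ∩ Ioo (0 : ℝ) 1,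
      (r * deriv (fun s => deriv Z s * Z s ^ (-((m : ℤ) + 1)) * Phat.eval (Z s)) r =
        ((m : ℝ) + 1) * deriv Z r * Z r ^ (-((m : ℤ) + 2)) * Phat.eval (Z r)
          - deriv Z r * Z r ^ (-((m : ℤ) + 1)) * Phat.eval (Z r)) ∧
      (r * deriv (fun s => deriv Z s * Z s ^ (-((m : ℤ) + 1)) * Phat.eval (Z s)) r /
          (deriv Z r * Z r ^ (-((m : ℤ) + 1)) * Phat.eval (Z r)) =
        -1 + ((m : ℝ) + 1) * (Z r)⁻¹) :=
  stmt_2_general m hm P Q Phat Qhat hQ hPhat hQhat a b Z hZan hODE hZ' hPZ hZpos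
end

section
/- With notation as in the context, the following hold: P̂(0) = 1 and P̂(x) > 0 for all x ∈ (0, (m+1)/2]; Q̂(0) = 1, Q̂((m+1)/2) = 0, Q̂'((m+1)/2) < 0, and Q̂(x) > 0 for all x ∈ (0, (m+1)/2). -/
/-!
Since λᵢ < 1, every root 2λᵢ/(m+1) of P lies below 2/(m+1), so P > 0 on [2/(m+1), ∞); hence
Q' = (m+1)·y·P > 0 there and Q, which vanishes at 2/(m+1), is positive beyond it. The reversed
polynomials inherit these signs through x ↦ 1/x, which maps (0, (m+1)/2] onto [2/(m+1), ∞).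
Their constant terms are the leading coefficients of the monic P and Q, and at the root (m+1)/2
of Q̂ the chain rule leaves only the term x^(m+1)·Q'(1/x)·(-1/x²) < 0.
-/

open Polynomial Set

namespace Polynomial

theorem eq_reflect_of_eval_eq_pow_mul_eval_inv {K : Type*} [Field K] [Infinite K] {p q : K[X]}
    {N : ℕ} (hq : q.natDegree ≤ N) (hpq : ∀ x : K, x ≠ 0 → p.eval x = x ^ N * q.eval (1 / x)) :
    p = reflect N q := by
  refine eq_of_infinite_eval_eq _ _ ((finite_singleton (0 : K)).infinite_compl.mono fun x hx => ?_)
  have hx : x ≠ 0 := hx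
  let := invertibleOfNonzero (inv_ne_zero hx)
  have := eval₂_reflect_mul_pow (RingHom.id K) x⁻¹ N q hq
  simp only [invOf_eq_inv, inv_inv, eval₂_id] at this
  show p.eval x = (reflect N q).eval x
  rw [hpq x hx, one_div, ← this, mul_comm, mul_assoc, ← mul_pow, inv_mul_cancel₀ hx, one_pow,
    mul_one]

theorem eval_zero_of_eval_eq_pow_mul_eval_inv {K : Type*} [Field K] [Infinite K] {p q : K[X]}
    {N : ℕ} (hq : q.natDegree ≤ N) (hpq : ∀ x : K, x ≠ 0 → p.eval x = x ^ N * q.eval (1 / x)) :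
    p.eval 0 = q.coeff N := by
  rw [eq_reflect_of_eval_eq_pow_mul_eval_inv hq hpq, ← coeff_zero_eq_eval_zero, coeff_reflect,
    revAt_zero]

theorem eval_derivative_of_eval_eq_pow_mul_eval_inv {𝕜 : Type*} [NontriviallyNormedField 𝕜]
    {p q : 𝕜[X]} {N : ℕ} (hpq : ∀ x : 𝕜, x ≠ 0 → p.eval x = x ^ N * q.eval (1 / x)) {a : 𝕜}
    (ha : a ≠ 0) (hroot : q.eval a⁻¹ = 0) :
    (derivative p).eval a = -(a ^ N * (derivative q).eval a⁻¹ / a ^ 2) := by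
  have hrhs : HasDerivAt (fun x => x ^ N * q.eval x⁻¹)
      ((N : 𝕜) * a ^ (N - 1) * q.eval a⁻¹ + a ^ N * ((derivative q).eval a⁻¹ * -(a ^ 2)⁻¹)) a :=
    (hasDerivAt_pow N a).mul ((q.hasDerivAt a⁻¹).comp a (hasDerivAt_inv ha))
  have hp : (fun x => p.eval x) =ᶠ[nhds a] fun x => x ^ N * q.eval x⁻¹ := by
    filter_upwards [eventually_ne_nhds ha] with x hx
    rw [hpq x hx, one_div]
  rw [(p.hasDerivAt a).unique (hrhs.congr_of_eventuallyEq hp), hroot]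
  ring

theorem eval_prod_X_sub_C_pos {ι : Type*} {s : Finset ι} {c : ι → ℝ} {y : ℝ}
    (hc : ∀ i ∈ s, c i < y) : 0 < (∏ i ∈ s, (X - C (c i))).eval y := by
  rw [eval_prod]
  exact Finset.prod_pos fun i hi => by simpa using hc i hi

theorem eval_pos_of_eval_eq_zero_of_derivative_pos {q : ℝ[X]} {a : ℝ} (hroot : q.eval a = 0)
    (hq' : ∀ y, a < y → 0 < (derivative q).eval y) {y : ℝ} (hy : a < y) : 0 < q.eval y := by
  have hmono : StrictMonoOn (fun y => q.eval y) (Ici a) :=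
    strictMonoOn_of_deriv_pos (convex_Ici a) q.continuous.continuousOn fun x hx => by
      rw [interior_Ici] at hx
      simpa only [Polynomial.deriv] using hq' x hx
  simpa only [hroot] using hmono self_mem_Ici hy.le hy

theorem monic_and_natDegree_of_derivative_eq {K : Type*} [Field K] [CharZero K] {q r : K[X]}
    (hr : r.Monic) (hq : derivative q = C ((r.natDegree : K) + 1) * r) :
    q.Monic ∧ q.natDegree = r.natDegree + 1 := by
  have hn : ((r.natDegree : K) + 1) ≠ 0 := by exact_mod_cast r.natDegree.succ_ne_zero
  have hdeg' : (derivative q).natDegree = r.natDegree := by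
    rw [hq, natDegree_C_mul hn]
  have hq0 : q.natDegree ≠ 0 := by
    rw [← derivative_ne_zero, hq]
    exact mul_ne_zero (C_ne_zero.mpr hn) hr.ne_zero
  have hdeg : q.natDegree = r.natDegree + 1 := by
    rw [natDegree_derivative] at hdeg'
    omega
  refine ⟨?_, hdeg⟩
  have hlc := leadingCoeff_derivative q
  rw [hq, leadingCoeff_mul, leadingCoeff_C, hr.leadingCoeff, mul_one, hdeg] at hlc
  push_cast at hlc
  exact mul_right_cancel₀ hn (hlc.symm.trans (one_mul _).symm)

end Polynomial

theorem stmt_5_general (m : ℕ) (hm : 2 ≤ m)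
    (lam : Fin (m - 1) → ℝ) (hlt : ∀ i, lam i < 1)
    (P Q Phat Qhat : Polynomial ℝ)
    (hP : P = ∏ i : Fin (m - 1), (X - C (2 * lam i / ((m : ℝ) + 1))))
    (hQder : ∀ y : ℝ, (derivative Q).eval y = ((m : ℝ) + 1) * y * P.eval y)
    (hQval : Q.eval (2 / ((m : ℝ) + 1)) = 0)
    (hPhat : ∀ x : ℝ, x ≠ 0 → Phat.eval x = x ^ (m - 1) * P.eval (1 / x))
    (hQhat : ∀ x : ℝ, x ≠ 0 → Qhat.eval x = x ^ (m + 1) * Q.eval (1 / x)) :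
    Phat.eval 0 = 1 ∧
    (∀ x ∈ Ioc (0 : ℝ) (((m : ℝ) + 1) / 2), 0 < Phat.eval x) ∧
    Qhat.eval 0 = 1 ∧
    Qhat.eval (((m : ℝ) + 1) / 2) = 0 ∧
    (derivative Qhat).eval (((m : ℝ) + 1) / 2) < 0 ∧
    (∀ x ∈ Ioo (0 : ℝ) (((m : ℝ) + 1) / 2), 0 < Qhat.eval x) := by
  set M : ℝ := (m : ℝ) + 1
  have hM0 : 0 < M := by positivity
  have hPmonic : P.Monic := hP ▸ monic_prod_X_sub_C _ _
  have hPdeg : P.natDegree = m - 1 := by simp [hP]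
  have hXPdeg : (X * P).natDegree = m := by
    rw [natDegree_X_mul hPmonic.ne_zero, hPdeg]; omega
  have hP_pos {y : ℝ} (hy : 2 / M ≤ y) : 0 < P.eval y := hP ▸ eval_prod_X_sub_C_pos fun i _ =>
    (div_lt_div_of_pos_right (by linarith [hlt i]) hM0).trans_le hy
  have hQ' : derivative Q = C (((X * P).natDegree : ℝ) + 1) * (X * P) := by
    refine Polynomial.funext fun y => ?_
    rw [hQder, hXPdeg]
    simp only [eval_mul, eval_C, eval_X]; ring
  obtain ⟨hQmonic, hQdeg⟩ := monic_and_natDegree_of_derivative_eq (monic_X.mul hPmonic) hQ'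
  rw [hXPdeg] at hQdeg
  have hQ_pos {y : ℝ} (hy : 2 / M < y) : 0 < Q.eval y :=
    eval_pos_of_eval_eq_zero_of_derivative_pos hQval (fun z hz => by
      rw [hQder]; have := hP_pos hz.le; have : 0 < z := (by positivity : 0 < 2 / M).trans hz
      positivity) hy
  have hinv : (M / 2)⁻¹ = 2 / M := inv_div M 2
  have hinv_le {x : ℝ} (hx : 0 < x) (hxM : x ≤ M / 2) : 2 / M ≤ 1 / x := by
    rw [div_le_div_iff₀ hM0 hx]; linarith
  refine ⟨?_, fun x hx => ?_, ?_, ?_, ?_, fun x hx => ?_⟩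
  · rw [eval_zero_of_eval_eq_pow_mul_eval_inv hPdeg.le hPhat, ← hPdeg, hPmonic.coeff_natDegree]
  · rw [hPhat x hx.1.ne']
    exact mul_pos (pow_pos hx.1 _) (hP_pos (hinv_le hx.1 hx.2))
  · rw [eval_zero_of_eval_eq_pow_mul_eval_inv hQdeg.le hQhat, ← hQdeg, hQmonic.coeff_natDegree]
  · rw [hQhat _ (by positivity), one_div, hinv, hQval, mul_zero]
  · rw [eval_derivative_of_eval_eq_pow_mul_eval_inv hQhat (by positivity) (hinv ▸ hQval), hinv,
      hQder, neg_lt_zero]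
    have := hP_pos le_rfl
    positivity
  · rw [hQhat x hx.1.ne']
    refine mul_pos (pow_pos hx.1 _) (hQ_pos ?_)
    rw [div_lt_div_iff₀ hM0 hx.1]; linarith [hx.2]

/-- sign properties of P̂ and Q̂ on (0, (m+1)/2]. -/
theorem stmt_5 (m : ℕ) (hm : 2 ≤ m)
    (lam : Fin (m - 1) → ℝ) (hmono : Monotone lam) (hlt : ∀ i, lam i < 1)
    (P Q Phat Qhat : Polynomial ℝ)
    (hP : P = ∏ i : Fin (m - 1), (X - C (2 * lam i / ((m : ℝ) + 1))))
    (hQder : ∀ y : ℝ, (derivative Q).eval y = ((m : ℝ) + 1) * y * P.eval y)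
    (hQval : Q.eval (2 / ((m : ℝ) + 1)) = 0)
    (hPhat : ∀ x : ℝ, x ≠ 0 → Phat.eval x = x ^ (m - 1) * P.eval (1 / x))
    (hQhat : ∀ x : ℝ, x ≠ 0 → Qhat.eval x = x ^ (m + 1) * Q.eval (1 / x)) :
    Phat.eval 0 = 1 ∧
    (∀ x ∈ Ioc (0 : ℝ) (((m : ℝ) + 1) / 2), 0 < Phat.eval x) ∧
    Qhat.eval 0 = 1 ∧
    Qhat.eval (((m : ℝ) + 1) / 2) = 0 ∧
    (derivative Qhat).eval (((m : ℝ) + 1) / 2) < 0 ∧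
    (∀ x ∈ Ioo (0 : ℝ) (((m : ℝ) + 1) / 2), 0 < Qhat.eval x) :=
  stmt_5_general m hm lam hlt P Q Phat Qhat hP hQder hQval hPhat hQhat
end

section
/- Let Z be as in the context. Then the limit of Z(r) as r → 0⁺ exists and equals (m+1)/2. -/
open Polynomial Set Filter Topology

/-- Z(r) tends to (m+1)/2 as r → 0⁺. -/
theorem stmt_7 (m : ℕ) (hm : 2 ≤ m)
    (lam : Fin (m - 1) → ℝ) (hmono : Monotone lam) (hlt : ∀ i, lam i < 1)
    (P Q Phat Qhat : Polynomial ℝ)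
    (hP : P = ∏ i : Fin (m - 1), (X - C (2 * lam i / ((m : ℝ) + 1))))
    (hQder : ∀ y : ℝ, (derivative Q).eval y = ((m : ℝ) + 1) * y * P.eval y)
    (hQval : Q.eval (2 / ((m : ℝ) + 1)) = 0)
    (hPhat : ∀ x : ℝ, x ≠ 0 → Phat.eval x = x ^ (m - 1) * P.eval (1 / x))
    (hQhat : ∀ x : ℝ, x ≠ 0 → Qhat.eval x = x ^ (m + 1) * Q.eval (1 / x))
    (Z : ℝ → ℝ)
    (hZan : ∃ c d : ℝ, Ioc (0 : ℝ) 1 ⊆ Ioo c d ∧ AnalyticOnNhd ℝ Z (Ioo c d))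
    (hODE : ∀ r ∈ Ioc (0 : ℝ) 1,
      r * deriv Z r * Phat.eval (Z r) + Qhat.eval (Z r) = 0)
    (hZ1 : Z 1 = 0)
    (hZ' : ∀ r ∈ Ioc (0 : ℝ) 1, deriv Z r < 0) :
    Tendsto Z (𝓝[>] (0 : ℝ)) (𝓝 (((m : ℝ) + 1) / 2)) := by
  obtain ⟨c, d, hsub, han⟩ := hZan
  set a : ℝ := (m : ℝ) + 1 with ha
  have ham : (3 : ℝ) ≤ a := by
    have : (2 : ℝ) ≤ (m : ℝ) := by exact_mod_cast hm
    rw [ha]; linarith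
  have ha0 : (0 : ℝ) < a := by linarith
  set T : ℝ := a / 2 with hT
  have hT0 : (0 : ℝ) < T := by rw [hT]; linarith
  have hTinv : 1 / T = 2 / a := by rw [hT]; field_simp
  -- differentiability / continuity of Z
  have hdiff : ∀ r ∈ Ioc (0 : ℝ) 1, DifferentiableAt ℝ Z r :=
    fun r hr => (han r (hsub hr)).differentiableAt
  have hcont : ∀ r ∈ Ioc (0 : ℝ) 1, ContinuousAt Z r :=
    fun r hr => (hdiff r hr).continuousAt
  -- positivity of P on [2/a, ∞)
  have hPpos : ∀ u : ℝ, 2 / a ≤ u → 0 < P.eval u := by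
    intro u hu
    rw [hP, eval_prod]
    apply Finset.prod_pos
    intro i _
    simp only [eval_sub, eval_X, eval_C]
    have h2 : 2 * lam i < 2 := by linarith [hlt i]
    have h3 := mul_lt_mul_of_pos_right h2 (inv_pos.mpr ha0)
    rw [div_eq_mul_inv] at hu
    rw [div_eq_mul_inv]
    linarith
  -- positivity of Q on (2/a, ∞)
  have hQpos : ∀ u : ℝ, 2 / a < u → 0 < Q.eval u := by
    intro u hu
    have h2a : (0 : ℝ) < 2 / a := by positivity
    have hmonoQ : StrictMonoOn (fun y => Q.eval y) (Icc (2 / a) u) := by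
      apply strictMonoOn_of_deriv_pos (convex_Icc _ _)
      · exact Q.continuous.continuousOn
      · intro y hy
        rw [interior_Icc] at hy
        rw [Polynomial.deriv, hQder]
        have hy0 : 0 < y := lt_trans h2a hy.1
        exact mul_pos (mul_pos ha0 hy0) (hPpos y hy.1.le)
    have := hmonoQ ⟨le_rfl, hu.le⟩ ⟨hu.le, le_rfl⟩ hu
    simpa [hQval] using this
  -- Qhat vanishes at T
  have hQhatT : Qhat.eval T = 0 := by
    rw [hQhat T (ne_of_gt hT0), hTinv, hQval, mul_zero]
  -- positivity of Phat on (0, T]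
  have hPhatpos : ∀ x : ℝ, 0 < x → x ≤ T → 0 < Phat.eval x := by
    intro x hx hxT
    rw [hPhat x (ne_of_gt hx)]
    have h1 : 2 / a ≤ 1 / x := by
      rw [← hTinv]; exact one_div_le_one_div_of_le hx hxT
    exact mul_pos (pow_pos hx _) (hPpos _ h1)
  -- positivity of Qhat on (0, T)
  have hQhatpos : ∀ x : ℝ, 0 < x → x < T → 0 < Qhat.eval x := by
    intro x hx hxT
    rw [hQhat x (ne_of_gt hx)]
    have h1 : 2 / a < 1 / x := by
      rw [← hTinv]; exact one_div_lt_one_div_of_lt hx hxT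
    exact mul_pos (pow_pos hx _) (hQpos _ h1)
  -- Z is strictly antitone on (0,1]
  have hanti : StrictAntiOn Z (Ioc (0 : ℝ) 1) := by
    intro x hx y hy hxy
    have h1 : StrictAntiOn Z (Icc x y) := by
      apply strictAntiOn_of_deriv_neg (convex_Icc _ _)
      · intro t ht
        exact (hcont t ⟨lt_of_lt_of_le hx.1 ht.1, le_trans ht.2 hy.2⟩).continuousWithinAt
      · intro t ht
        rw [interior_Icc] at ht
        exact hZ' t ⟨lt_trans hx.1 ht.1, le_of_lt (lt_of_lt_of_le ht.2 hy.2)⟩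
    exact h1 (left_mem_Icc.mpr hxy.le) (right_mem_Icc.mpr hxy.le) hxy
  -- Z < T on (0,1]
  have hZltT : ∀ r ∈ Ioc (0 : ℝ) 1, Z r < T := by
    by_contra hcon
    push_neg at hcon
    obtain ⟨r₀, hr₀, hge⟩ := hcon
    have hcont' : ContinuousOn Z (Icc r₀ 1) := fun t ht =>
      (hcont t ⟨lt_of_lt_of_le hr₀.1 ht.1, ht.2⟩).continuousWithinAt
    have hmem : T ∈ Icc (Z 1) (Z r₀) := ⟨by rw [hZ1]; exact hT0.le, hge⟩
    obtain ⟨r₁, hr₁mem, hr₁⟩ := intermediate_value_Icc' hr₀.2 hcont' hmem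
    have hr₁' : r₁ ∈ Ioc (0 : ℝ) 1 := ⟨lt_of_lt_of_le hr₀.1 hr₁mem.1, hr₁mem.2⟩
    have hode := hODE r₁ hr₁'
    rw [hr₁, hQhatT] at hode
    have hP' : 0 < Phat.eval T := hPhatpos T hT0 le_rfl
    have hd := hZ' r₁ hr₁'
    have hlt0 : r₁ * deriv Z r₁ * Phat.eval T < 0 :=
      mul_neg_of_neg_of_pos (mul_neg_of_pos_of_neg hr₁'.1 hd) hP'
    linarith
  -- setup for the limit
  have hIoo : Ioo (0 : ℝ) 1 ⊆ Ioc (0 : ℝ) 1 := Ioo_subset_Ioc_self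
  have hbdd : BddAbove (Z '' Ioo (0 : ℝ) 1) := by
    refine ⟨T, ?_⟩
    rintro y ⟨r, hr, rfl⟩
    exact (hZltT r (hIoo hr)).le
  have hne : (Ioo (0 : ℝ) 1).Nonempty := ⟨1 / 2, by norm_num⟩
  have hAnt : AntitoneOn Z (Ioo (0 : ℝ) 1) := by
    intro x hx y hy hxy
    rcases eq_or_lt_of_le hxy with rfl | h
    · exact le_rfl
    · exact (hanti (hIoo hx) (hIoo hy) h).le
  have hten := AntitoneOn.tendsto_nhdsWithin_Ioo_right hne hAnt hbdd
  set L : ℝ := sSup (Z '' Ioo (0 : ℝ) 1) with hL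
  have hhalf : (1 / 2 : ℝ) ∈ Ioo (0 : ℝ) 1 := by norm_num
  have hbL : Z (1 / 2) ≤ L := le_csSup hbdd ⟨1 / 2, hhalf, rfl⟩
  have hb0 : 0 < Z (1 / 2) := by
    have h1 := hanti (hIoo hhalf) (by norm_num : (1 : ℝ) ∈ Ioc 0 1) (by norm_num)
    rw [hZ1] at h1; linarith
  have hL0 : 0 < L := lt_of_lt_of_le hb0 hbL
  have hLleT : L ≤ T := by
    apply csSup_le (hne.image Z)
    rintro y ⟨r, hr, rfl⟩
    exact (hZltT r (hIoo hr)).le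
  -- main claim: L = T
  suffices hLT : L = T by
    rw [← hLT]; exact hten
  by_contra hcon
  have hLltT : L < T := lt_of_le_of_ne hLleT hcon
  -- compact interval where Z lives near 0
  set K : Set ℝ := Icc (Z (1 / 2)) L with hK
  have hKcpt : IsCompact K := isCompact_Icc
  have hKne : K.Nonempty := ⟨Z (1 / 2), le_rfl, hbL⟩
  obtain ⟨y₀, hy₀K, hy₀min⟩ := hKcpt.exists_isMinOn hKne Qhat.continuous.continuousOn
  obtain ⟨y₁, hy₁K, hy₁max⟩ := hKcpt.exists_isMaxOn hKne Phat.continuous.continuousOn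
  set ε : ℝ := Qhat.eval y₀ with hε
  set M : ℝ := Phat.eval y₁ with hM
  have hε0 : 0 < ε :=
    hQhatpos y₀ (lt_of_lt_of_le hb0 hy₀K.1) (lt_of_le_of_lt hy₀K.2 hLltT)
  have hM0 : 0 < M :=
    hPhatpos y₁ (lt_of_lt_of_le hb0 hy₁K.1) (le_of_lt (lt_of_le_of_lt hy₁K.2 hLltT))
  -- membership of Z r in K for small r
  have hZK : ∀ r ∈ Ioo (0 : ℝ) (1 / 2), Z r ∈ K := by
    intro r hr
    have hrI : r ∈ Ioc (0 : ℝ) 1 := ⟨hr.1, by linarith [hr.2]⟩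
    constructor
    · exact (hanti hrI (hIoo hhalf) hr.2).le
    · exact le_csSup hbdd ⟨r, ⟨hr.1, by linarith [hr.2]⟩, rfl⟩
  -- derivative bound
  have key : ∀ r ∈ Ioo (0 : ℝ) (1 / 2), deriv Z r ≤ (-ε) / (M * r) := by
    intro r hr
    have hrI : r ∈ Ioc (0 : ℝ) 1 := ⟨hr.1, by linarith [hr.2]⟩
    have hZr := hZK r hr
    have hQb : ε ≤ Qhat.eval (Z r) := hy₀min hZr
    have hPb : Phat.eval (Z r) ≤ M := hy₁max hZr
    have hPpos' : 0 < Phat.eval (Z r) :=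
      hPhatpos _ (lt_of_lt_of_le hb0 hZr.1) (le_of_lt (lt_of_le_of_lt hZr.2 hLltT))
    have hode := hODE r hrI
    have hd := hZ' r hrI
    rw [le_div_iff₀ (mul_pos hM0 hr.1)]
    nlinarith
  -- the auxiliary function g(t) = Z t + (ε/M) log t is antitone
  set C : ℝ := ε / M with hC
  have hC0 : 0 < C := div_pos hε0 hM0
  set r₂ : ℝ := (1 / 2) * Real.exp (-(L + 1) / C) with hr₂
  have hr₂0 : 0 < r₂ := by positivity
  have hr₂half : r₂ < 1 / 2 := by
    have hneg : -(L + 1) / C < 0 := div_neg_of_neg_of_pos (by linarith) hC0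
    have := Real.exp_lt_one_iff.mpr hneg
    rw [hr₂]; nlinarith [Real.exp_pos (-(L + 1) / C)]
  have hg : AntitoneOn (fun t => Z t + C * Real.log t) (Icc r₂ (1 / 2)) := by
    apply antitoneOn_of_deriv_nonpos (convex_Icc _ _)
    · intro t ht
      have ht0 : 0 < t := lt_of_lt_of_le hr₂0 ht.1
      exact ((hcont t ⟨ht0, by linarith [ht.2]⟩).add
        (continuousAt_const.mul (Real.continuousAt_log ht0.ne'))).continuousWithinAt
    · intro t ht
      rw [interior_Icc] at ht
      have ht0 : 0 < t := lt_trans hr₂0 ht.1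
      exact (((hdiff t ⟨ht0, by linarith [ht.2]⟩).add
        ((Real.differentiableAt_log ht0.ne').const_mul C))).differentiableWithinAt
    · intro t ht
      rw [interior_Icc] at ht
      have ht0 : 0 < t := lt_trans hr₂0 ht.1
      have htI : t ∈ Ioo (0 : ℝ) (1 / 2) := ⟨ht0, ht.2⟩
      have hder : HasDerivAt (fun u => Z u + C * Real.log u) (deriv Z t + C * t⁻¹) t :=
        (hdiff t ⟨ht0, by linarith [ht.2]⟩).hasDerivAt.add
          ((Real.hasDerivAt_log ht0.ne').const_mul C)
      rw [hder.deriv]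
      have hk := key t htI
      have h2 : C * t⁻¹ = ε / (M * t) := by
        rw [hC, ← div_div, div_eq_mul_inv (ε / M) t]
      have h3 : (-ε) / (M * t) = -(ε / (M * t)) := neg_div _ _
      rw [h2]
      rw [h3] at hk
      linarith
  -- evaluate antitonicity between r₂ and 1/2
  have hgle := hg ⟨le_rfl, hr₂half.le⟩ ⟨hr₂half.le, le_rfl⟩ hr₂half.le
  simp only at hgle
  have hlog : Real.log r₂ = Real.log (1 / 2) + -(L + 1) / C := by
    rw [hr₂, Real.log_mul (by norm_num) (Real.exp_ne_zero _), Real.log_exp]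
  have hClog : C * Real.log r₂ = C * Real.log (1 / 2) - (L + 1) := by
    rw [hlog, mul_add]
    have : C * (-(L + 1) / C) = -(L + 1) := by field_simp
    rw [this]; ring
  have hZr₂leL : Z r₂ ≤ L :=
    le_csSup hbdd ⟨r₂, ⟨hr₂0, by linarith⟩, rfl⟩
  linarith
end

section
/- Set λ = (m+1)/2 and let g be the unique real polynomial with Q̂(x) = (x − λ)·g(x) (it exists since Q̂(λ) = 0). Then g(λ) = −2·P̂(λ) < 0. Moreover, for Z as in the context, the limit of (Z(r) − λ)/r as r → 0⁺ exists and equals 0. -/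
/-! Write `λ = (m+1)/2` and `w = λ - Z`, which is nonnegative because `Z` decreases to `λ`.
Differentiating `Q̂(x) = x^(m+1) Q(1/x)` at `λ`, where `Q(1/λ) = 0`, gives
`g(λ) = Q̂'(λ) = -2 P̂(λ)`. The equation reads `r w' P̂(Z) = -w g(Z)` and `-g(Z)/P̂(Z) → 2`, so
near `0` we have `r w' ≥ α w` for some `α > 1`. Then `w / r^α` is nondecreasing, hence
`w(r) = O(r^α)` and `w(r) / r → 0`. -/

open Polynomial Set Filter Topology

theorem monotoneOn_div_rpow_of_mul_le_mul_deriv {w w' : ℝ → ℝ} {α ε : ℝ}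
    (hw : ∀ r ∈ Ioo 0 ε, HasDerivAt w (w' r) r)
    (hineq : ∀ r ∈ Ioo 0 ε, α * w r ≤ r * w' r) :
    MonotoneOn (fun r => w r / r ^ α) (Ioo 0 ε) := by
  have hderiv : ∀ r ∈ Ioo 0 ε, HasDerivAt (fun r => w r / r ^ α)
      ((w' r * r ^ α - w r * (α * r ^ (α - 1))) / (r ^ α) ^ 2) r := fun r hr =>
    (hw r hr).div (Real.hasDerivAt_rpow_const (Or.inl hr.1.ne'))
      (Real.rpow_pos_of_pos hr.1 α).ne'
  refine monotoneOn_of_hasDerivWithinAt_nonneg (convex_Ioo 0 ε)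
    (fun r hr => (hderiv r hr).continuousAt.continuousWithinAt)
    (fun r hr => (hderiv r (interior_subset hr)).hasDerivWithinAt) fun r hr => ?_
  rw [interior_Ioo] at hr
  have hr0 : 0 < r := hr.1
  have hnum : w' r * r ^ α - w r * (α * r ^ (α - 1)) = r ^ α / r * (r * w' r - α * w r) := by
    rw [Real.rpow_sub_one hr0.ne']
    field_simp
  rw [hnum]
  exact div_nonneg (mul_nonneg (div_nonneg (Real.rpow_nonneg hr0.le α) hr0.le)
    (sub_nonneg.2 (hineq r hr))) (sq_nonneg _)

theorem tendsto_div_nhdsGT_zero_of_mul_le_mul_deriv {w w' : ℝ → ℝ} {α : ℝ} (hα : 1 < α)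
    (hw : ∀ᶠ r in 𝓝[>] 0, HasDerivAt w (w' r) r) (hw₀ : ∀ᶠ r in 𝓝[>] 0, 0 ≤ w r)
    (hineq : ∀ᶠ r in 𝓝[>] 0, α * w r ≤ r * w' r) :
    Tendsto (fun r => w r / r) (𝓝[>] 0) (𝓝 0) := by
  obtain ⟨ε, hε, hsub⟩ := mem_nhdsGT_iff_exists_Ioo_subset.1 (hw.and hineq)
  have hε₂ : ε / 2 ∈ Ioo 0 ε := ⟨half_pos hε, half_lt_self hε⟩
  set C := w (ε / 2) / (ε / 2) ^ α
  have hbound : ∀ r ∈ Ioo 0 (ε / 2), w r / r ≤ C * r ^ (α - 1) := fun r hr => by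
    have hle : w r / r ^ α ≤ C :=
      monotoneOn_div_rpow_of_mul_le_mul_deriv (fun r hr => (hsub hr).1)
        (fun r hr => (hsub hr).2) ⟨hr.1, hr.2.trans hε₂.2⟩ hε₂ hr.2.le
    have hrα : 0 < r ^ α := Real.rpow_pos_of_pos hr.1 α
    calc w r / r = w r / r ^ α * r ^ (α - 1) := by
          rw [Real.rpow_sub_one hr.1.ne']
          field_simp
      _ ≤ C * r ^ (α - 1) := by gcongr; exact Real.rpow_nonneg hr.1.le _
  have hpow : Tendsto (fun r : ℝ => C * r ^ (α - 1)) (𝓝[>] 0) (𝓝 0) := by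
    have := ((Real.continuousAt_rpow_const 0 (α - 1) (Or.inr (by linarith))).const_mul C).tendsto
    rw [Real.zero_rpow (by linarith), mul_zero] at this
    exact this.mono_left nhdsWithin_le_nhds
  refine tendsto_of_tendsto_of_tendsto_of_le_of_le' tendsto_const_nhds hpow ?_ ?_
  · filter_upwards [hw₀, self_mem_nhdsWithin] with r hr hr0
    exact div_nonneg hr (le_of_lt hr0)
  · filter_upwards [Ioo_mem_nhdsGT (half_pos hε)] with r hr
    exact hbound r hr

theorem Polynomial.eval_derivative_of_eval_eq_pow_mul_eval_one_div {p q : ℝ[X]} {k : ℕ}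
    (h : ∀ x : ℝ, x ≠ 0 → q.eval x = x ^ k * p.eval (1 / x)) {a : ℝ} (ha : a ≠ 0) :
    (derivative q).eval a =
      k * a ^ (k - 1) * p.eval (1 / a) - a ^ k * (derivative p).eval (1 / a) / a ^ 2 := by
  have hq : (fun x => q.eval x) =ᶠ[𝓝 a] fun x => x ^ k * p.eval (1 / x) :=
    eventually_ne_nhds ha |>.mono h
  have hinv : HasDerivAt (fun x : ℝ => 1 / x) (-(a ^ 2)⁻¹) a := by
    simpa only [one_div] using hasDerivAt_inv ha
  have : HasDerivAt (fun x => x ^ k * p.eval (1 / x))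
      (k * a ^ (k - 1) * p.eval (1 / a) + a ^ k * ((derivative p).eval (1 / a) * -(a ^ 2)⁻¹)) a :=
    (hasDerivAt_pow k a).mul ((p.hasDerivAt (1 / a)).comp a hinv)
  rw [← Polynomial.deriv, hq.deriv_eq, this.deriv]
  ring

theorem Polynomial.eval_derivative_X_sub_C_mul_self (g : ℝ[X]) (a : ℝ) :
    (derivative ((X - C a) * g)).eval a = g.eval a := by
  simp [derivative_mul]

theorem AntitoneOn.le_of_tendsto_nhdsGT {β : Type*} [Preorder β] [TopologicalSpace β]
    [OrderClosedTopology β] {f : ℝ → β} {a b : ℝ} {l : β} (hf : AntitoneOn f (Ioc a b))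
    (hl : Tendsto f (𝓝[>] a) (𝓝 l)) {x : ℝ} (hx : x ∈ Ioc a b) : f x ≤ l :=
  ge_of_tendsto hl <| mem_of_superset (Ioc_mem_nhdsGT hx.1) fun _ hy =>
    hf ⟨hy.1, hy.2.trans hx.2⟩ hx hy.2

theorem tendsto_sub_div_nhdsGT_zero_of_mul_deriv_mul_eval_add_eval {p q g : ℝ[X]} {a : ℝ}
    {Z Z' : ℝ → ℝ} (hq : q = (X - C a) * g) (hp : 0 < p.eval a) (hgp : g.eval a < -p.eval a)
    (hZ : ∀ᶠ r in 𝓝[>] 0, HasDerivAt Z (Z' r) r) (hZa : ∀ᶠ r in 𝓝[>] 0, Z r ≤ a)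
    (hode : ∀ᶠ r in 𝓝[>] 0, r * Z' r * p.eval (Z r) + q.eval (Z r) = 0)
    (hlim : Tendsto Z (𝓝[>] 0) (𝓝 a)) :
    Tendsto (fun r => (Z r - a) / r) (𝓝[>] 0) (𝓝 0) := by
  obtain ⟨α, hα, hαa⟩ : ∃ α, 1 < α ∧ α * p.eval a < -g.eval a := by
    obtain ⟨α, hα, hαa⟩ := exists_between ((one_lt_div hp).2 (lt_neg.1 hgp))
    exact ⟨α, hα, (lt_div_iff₀ hp).1 hαa⟩
  have hpZ : ∀ᶠ r in 𝓝[>] 0, 0 < p.eval (Z r) :=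
    (p.continuous.tendsto a).comp hlim |>.eventually (lt_mem_nhds hp)
  have hgZ : ∀ᶠ r in 𝓝[>] 0, α * p.eval (Z r) < -g.eval (Z r) :=
    (((p.continuous.const_mul α).sub g.continuous.neg).tendsto a).comp hlim |>.eventually
      (gt_mem_nhds (sub_neg.2 hαa)) |>.mono fun r hr => sub_neg.1 hr
  have hineq : ∀ᶠ r in 𝓝[>] 0, α * (a - Z r) ≤ r * -Z' r := by
    filter_upwards [hZa, hode, hpZ, hgZ] with r hZa hode hpZ hgZ
    rw [hq, eval_mul, eval_sub, eval_X, eval_C] at hode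
    refine le_of_mul_le_mul_right ?_ hpZ
    nlinarith [mul_le_mul_of_nonneg_left hgZ.le (sub_nonneg.2 hZa)]
  have := (tendsto_div_nhdsGT_zero_of_mul_le_mul_deriv hα
    (hZ.mono fun r hr => hr.const_sub a) (hZa.mono fun r hr => sub_nonneg.2 hr) hineq).neg
  simpa only [← neg_div, neg_sub, neg_zero] using this

theorem stmt_8_general (m : ℕ) (hm : 2 ≤ m)
    (P Q Phat Qhat : Polynomial ℝ)
    (hQder : ∀ y : ℝ, (derivative Q).eval y = ((m : ℝ) + 1) * y * P.eval y)
    (hQval : Q.eval (2 / ((m : ℝ) + 1)) = 0)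
    (hPhat : ∀ x : ℝ, x ≠ 0 → Phat.eval x = x ^ (m - 1) * P.eval (1 / x))
    (hQhat : ∀ x : ℝ, x ≠ 0 → Qhat.eval x = x ^ (m + 1) * Q.eval (1 / x))
    (hPhatpos : 0 < Phat.eval (((m : ℝ) + 1) / 2))
    (g : Polynomial ℝ)
    (hg : Qhat = (X - C (((m : ℝ) + 1) / 2)) * g)
    (Z : ℝ → ℝ)
    (hZan : ∃ c d : ℝ, Ioc (0 : ℝ) 1 ⊆ Ioo c d ∧ AnalyticOnNhd ℝ Z (Ioo c d))
    (hODE : ∀ r ∈ Ioc (0 : ℝ) 1,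
      r * deriv Z r * Phat.eval (Z r) + Qhat.eval (Z r) = 0)
    (hZ' : ∀ r ∈ Ioc (0 : ℝ) 1, deriv Z r < 0)
    (hZlim : Tendsto Z (𝓝[>] (0 : ℝ)) (𝓝 (((m : ℝ) + 1) / 2))) :
    g.eval (((m : ℝ) + 1) / 2) = -2 * Phat.eval (((m : ℝ) + 1) / 2) ∧
    g.eval (((m : ℝ) + 1) / 2) < 0 ∧
    Tendsto (fun r => (Z r - ((m : ℝ) + 1) / 2) / r) (𝓝[>] (0 : ℝ)) (𝓝 0) := by
  set l : ℝ := ((m : ℝ) + 1) / 2 with hl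
  have hl₀ : l ≠ 0 := by positivity
  have hgl : g.eval l = -2 * Phat.eval l := by
    obtain ⟨n, rfl⟩ : ∃ n, m = n + 1 := ⟨m - 1, by omega⟩
    have hQl : Q.eval (1 / l) = 0 := by rwa [hl, one_div_div]
    rw [← eval_derivative_X_sub_C_mul_self, ← hg,
      eval_derivative_of_eval_eq_pow_mul_eval_one_div hQhat hl₀, hPhat l hl₀, hQder, hQl]
    simp only [Nat.add_sub_cancel, hl]
    push_cast
    field_simp
    ring
  refine ⟨hgl, by linarith, ?_⟩
  obtain ⟨c, d, hsub, han⟩ := hZan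
  have hZdiff : ∀ r ∈ Ioc (0 : ℝ) 1, DifferentiableAt ℝ Z r := fun r hr =>
    (han r (hsub hr)).differentiableAt
  have hanti : AntitoneOn Z (Ioc 0 1) :=
    antitoneOn_of_deriv_nonpos (convex_Ioc 0 1)
      (fun r hr => (hZdiff r hr).continuousAt.continuousWithinAt)
      (fun r hr => (hZdiff r (interior_subset hr)).differentiableWithinAt)
      fun r hr => (hZ' r (interior_subset hr)).le
  have hIoc : ∀ᶠ r in 𝓝[>] (0 : ℝ), r ∈ Ioc (0 : ℝ) 1 := Ioc_mem_nhdsGT zero_lt_one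
  exact tendsto_sub_div_nhdsGT_zero_of_mul_deriv_mul_eval_add_eval hg hPhatpos (by linarith)
    (hIoc.mono fun r hr => (hZdiff r hr).hasDerivAt)
    (hIoc.mono fun r hr => hanti.le_of_tendsto_nhdsGT hZlim hr) (hIoc.mono hODE) hZlim

/-- Lemma 3.10 of the paper: with λ = (m+1)/2 and Q̂ = (x−λ)·g,
one has g(λ) = −2·P̂(λ) < 0, and (Z(r) − λ)/r → 0 as r → 0⁺. -/
theorem stmt_8 (m : ℕ) (hm : 2 ≤ m)
    (lam : Fin (m - 1) → ℝ) (hmono : Monotone lam) (hlt : ∀ i, lam i < 1)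
    (P Q Phat Qhat : Polynomial ℝ)
    (hP : P = ∏ i : Fin (m - 1), (X - C (2 * lam i / ((m : ℝ) + 1))))
    (hQder : ∀ y : ℝ, (derivative Q).eval y = ((m : ℝ) + 1) * y * P.eval y)
    (hQval : Q.eval (2 / ((m : ℝ) + 1)) = 0)
    (hPhat : ∀ x : ℝ, x ≠ 0 → Phat.eval x = x ^ (m - 1) * P.eval (1 / x))
    (hQhat : ∀ x : ℝ, x ≠ 0 → Qhat.eval x = x ^ (m + 1) * Q.eval (1 / x))
    (hQhatval : Qhat.eval (((m : ℝ) + 1) / 2) = 0)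
    (hPhatpos : 0 < Phat.eval (((m : ℝ) + 1) / 2))
    (g : Polynomial ℝ)
    (hg : Qhat = (X - C (((m : ℝ) + 1) / 2)) * g)
    (Z : ℝ → ℝ)
    (hZan : ∃ c d : ℝ, Ioc (0 : ℝ) 1 ⊆ Ioo c d ∧ AnalyticOnNhd ℝ Z (Ioo c d))
    (hODE : ∀ r ∈ Ioc (0 : ℝ) 1,
      r * deriv Z r * Phat.eval (Z r) + Qhat.eval (Z r) = 0)
    (hZ1 : Z 1 = 0)
    (hZ' : ∀ r ∈ Ioc (0 : ℝ) 1, deriv Z r < 0)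
    (hZlim : Tendsto Z (𝓝[>] (0 : ℝ)) (𝓝 (((m : ℝ) + 1) / 2))) :
    g.eval (((m : ℝ) + 1) / 2) = -2 * Phat.eval (((m : ℝ) + 1) / 2) ∧
    g.eval (((m : ℝ) + 1) / 2) < 0 ∧
    Tendsto (fun r => (Z r - ((m : ℝ) + 1) / 2) / r) (𝓝[>] (0 : ℝ)) (𝓝 0) :=
  stmt_8_general m hm P Q Phat Qhat hQder hQval hPhat hQhat hPhatpos g hg Z hZan hODE hZ' hZlim
end

section
/- Set λ = (m+1)/2 and define W(r) = (Z(r) − λ)/r² for r ∈ (0,1], with Z as in the context. Then W(r) < 0 for all r ∈ (0,1], and the limit a = lim_{r→0⁺} W(r) exists and is a negative real number. -/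
open Polynomial Set Filter Topology

/-!
Write `c = (m + 1) / 2` and `w = c - Z`. Since `Q (1 / c) = 0` and `Q' = (m + 1) y P`, `c` is a
root of `Q̂` with `Q̂'(c) = -2 P̂(c)`, so `Q̂ = (X - c) (-2 P̂ + (X - c) T)` for a polynomial `T`.
As `P̂(c) = ∏ (1 - λᵢ) ≠ 0`, the ODE becomes `r w' = w (2 + w g)` with `g = T(Z) / P̂(Z)` bounded
near `r = 0`. For small `r` this gives `r w' ≥ w`, so `w / r` increases and `w = O(r)`; then
`log (w / r²)` has the bounded derivative `w g / r`, hence converges as `r → 0⁺`, and `w / r²`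
has a positive limit.
-/

theorem monotoneOn_Ioc_of_hasDerivAt_nonneg {f f' : ℝ → ℝ} {a b : ℝ}
    (hf : ∀ x ∈ Ioc a b, HasDerivAt f (f' x) x) (hf' : ∀ x ∈ Ioo a b, 0 ≤ f' x) :
    MonotoneOn f (Ioc a b) := by
  refine monotoneOn_of_hasDerivWithinAt_nonneg (f' := f') (convex_Ioc a b)
    (fun x hx => (hf x hx).continuousAt.continuousWithinAt) (fun x hx => ?_) ?_
  · rw [interior_Ioc] at hx ⊢
    exact (hf x (Ioo_subset_Ioc_self hx)).hasDerivWithinAt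
  · rwa [interior_Ioc]

theorem exists_tendsto_nhdsGT_of_hasDerivAt_of_abs_le {f f' : ℝ → ℝ} {a b M : ℝ} (hab : a < b)
    (hf : ∀ x ∈ Ioc a b, HasDerivAt f (f' x) x) (hf' : ∀ x ∈ Ioc a b, |f' x| ≤ M) :
    ∃ L, Tendsto f (𝓝[>] a) (𝓝 L) := by
  have hM : 0 ≤ M := (abs_nonneg _).trans (hf' b ⟨hab, le_rfl⟩)
  have hup : MonotoneOn (fun x => f x + M * x) (Ioc a b) :=
    monotoneOn_Ioc_of_hasDerivAt_nonneg
      (fun x hx => (hf x hx).add ((hasDerivAt_id' x).const_mul M)) fun x hx => by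
        linarith [neg_abs_le (f' x), hf' x (Ioo_subset_Ioc_self hx)]
  have hdown : MonotoneOn (fun x => M * x - f x) (Ioc a b) :=
    monotoneOn_Ioc_of_hasDerivAt_nonneg
      (fun x hx => ((hasDerivAt_id' x).const_mul M).sub (hf x hx)) fun x hx => by
        linarith [le_abs_self (f' x), hf' x (Ioo_subset_Ioc_self hx)]
  have hbdd : BddBelow ((fun x => f x + M * x) '' Ioo a b) := by
    refine ⟨f b - M * b + 2 * M * a, ?_⟩
    rintro _ ⟨x, hx, rfl⟩
    have := hdown (Ioo_subset_Ioc_self hx) ⟨hab, le_rfl⟩ hx.2.le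
    nlinarith [hx.1]
  have hlim := (hup.mono Ioo_subset_Ioc_self).tendsto_nhdsWithin_Ioo_right
    (nonempty_Ioo.2 hab) hbdd
  refine ⟨_, (hlim.sub (((continuous_const_mul M).tendsto a).mono_left nhdsWithin_le_nhds)).congr
    fun x => ?_⟩
  ring

theorem StrictAntiOn.lt_of_tendsto_nhdsGT {α β : Type*} [LinearOrder α] [TopologicalSpace α]
    [OrderTopology α] [DenselyOrdered α] [LinearOrder β] [TopologicalSpace β]
    [OrderClosedTopology β] {f : α → β} {a b : α} {l : β} (hf : StrictAntiOn f (Ioc a b))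
    (hl : Tendsto f (𝓝[>] a) (𝓝 l)) {x : α} (hx : x ∈ Ioc a b) : f x < l := by
  obtain ⟨y, hay, hyx⟩ := exists_between hx.1
  have hy : y ∈ Ioc a b := ⟨hay, hyx.le.trans hx.2⟩
  have := nhdsGT_neBot_of_exists_gt ⟨y, hay⟩
  refine (hf hy hx hyx).trans_le (ge_of_tendsto hl ?_)
  filter_upwards [Ioo_mem_nhdsGT hay] with t ht
  exact (hf ⟨ht.1, ht.2.le.trans hy.2⟩ hy ht.2).le

theorem lt_of_tendsto_nhdsGT_of_deriv_neg {f : ℝ → ℝ} {a b l x : ℝ}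
    (hf : ∀ y ∈ Ioc a b, deriv f y < 0) (hl : Tendsto f (𝓝[>] a) (𝓝 l)) (hx : x ∈ Ioc a b) :
    f x < l := by
  have hcont : ContinuousOn f (Ioc a b) := fun y hy =>
    (differentiableAt_of_deriv_ne_zero (hf y hy).ne).continuousAt.continuousWithinAt
  have hanti : StrictAntiOn f (Ioc a b) :=
    strictAntiOn_of_deriv_neg (convex_Ioc a b) hcont fun y hy =>
      hf y (Ioo_subset_Ioc_self (by rwa [interior_Ioc] at hy))
  exact hanti.lt_of_tendsto_nhdsGT hl hx

theorem exists_pos_tendsto_div_sq_of_mul_deriv_eq {w w' g : ℝ → ℝ}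
    (hw : Tendsto w (𝓝[>] 0) (𝓝 0)) (hg : IsBoundedUnder (· ≤ ·) (𝓝[>] 0) (norm ∘ g))
    (hode : ∀ᶠ r in 𝓝[>] 0,
      HasDerivAt w (w' r) r ∧ r * w' r = w r * (2 + w r * g r) ∧ 0 < w r) :
    ∃ a, 0 < a ∧ Tendsto (fun r => w r / r ^ 2) (𝓝[>] 0) (𝓝 a) := by
  have hsmall : ∀ᶠ r in 𝓝[>] 0, |w r * g r| < 1 := by
    simpa using (hw.zero_mul_isBoundedUnder_le hg).abs.eventually (gt_mem_nhds (by simp))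
  obtain ⟨K, hK⟩ := hg
  obtain ⟨r₀, hr₀, hIoc⟩ := mem_nhdsGT_iff_exists_Ioc_subset.1
    (hode.and (hsmall.and (eventually_map.1 hK)))
  have hmono : MonotoneOn (fun r => w r / r) (Ioc 0 r₀) := by
    refine monotoneOn_Ioc_of_hasDerivAt_nonneg
      (fun r hr => (hIoc hr).1.1.div (hasDerivAt_id' r) hr.1.ne') fun r hr => ?_
    obtain ⟨⟨-, hder, hwr⟩, hwg, -⟩ := hIoc (Ioo_subset_Ioc_self hr)
    have := (abs_lt.1 hwg).1
    exact div_nonneg (by nlinarith) (sq_nonneg r)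
  have hderiv : ∀ r ∈ Ioc 0 r₀,
      HasDerivAt (fun r => Real.log (w r) - 2 * Real.log r) (w r * g r / r) r := by
    intro r hr
    obtain ⟨⟨hd, hder, hwr⟩, -⟩ := hIoc hr
    refine ((hd.log hwr.ne').sub ((Real.hasDerivAt_log hr.1.ne').const_mul 2)).congr_deriv ?_
    have := hr.1.ne'
    field_simp
    linear_combination hder
  have hbound : ∀ r ∈ Ioc 0 r₀, |w r * g r / r| ≤ K * (w r₀ / r₀) := by
    intro r hr
    obtain ⟨⟨-, -, hwr⟩, -, hgK⟩ := hIoc hr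
    have hC := hmono hr ⟨hr₀, le_rfl⟩ hr.2
    rw [abs_div, abs_mul, abs_of_pos hwr, abs_of_pos hr.1, mul_comm, mul_div_assoc]
    exact mul_le_mul hgK hC (by positivity [hr.1]) ((norm_nonneg _).trans hgK)
  obtain ⟨L, hL⟩ := exists_tendsto_nhdsGT_of_hasDerivAt_of_abs_le hr₀ hderiv hbound
  refine ⟨Real.exp L, Real.exp_pos L, ((Real.continuous_exp.tendsto L).comp hL).congr' ?_⟩
  filter_upwards [Ioc_mem_nhdsGT hr₀] with r hr
  rw [Function.comp_apply, Real.exp_sub, Real.exp_log (hIoc hr).1.2.2, two_mul, Real.exp_add,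
    Real.exp_log hr.1, sq]

theorem exists_pos_tendsto_sub_div_sq {p t Z Z' : ℝ → ℝ} {c : ℝ}
    (hp : ContinuousAt p c) (ht : ContinuousAt t c) (hpc : p c ≠ 0)
    (hZlim : Tendsto Z (𝓝[>] 0) (𝓝 c))
    (hZ : ∀ᶠ r in 𝓝[>] 0, HasDerivAt Z (Z' r) r ∧ Z r < c ∧
      r * Z' r * p (Z r) + (Z r - c) * (-2 * p (Z r) + (Z r - c) * t (Z r)) = 0) :
    ∃ a, 0 < a ∧ Tendsto (fun r => (c - Z r) / r ^ 2) (𝓝[>] 0) (𝓝 a) := by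
  have hpZ := hp.tendsto.comp hZlim
  have hg : Tendsto (fun r => t (Z r) / p (Z r)) (𝓝[>] 0) (𝓝 (t c / p c)) :=
    (ht.tendsto.comp hZlim).div hpZ hpc
  refine exists_pos_tendsto_div_sq_of_mul_deriv_eq (w' := fun r => -Z' r)
    (by simpa using (tendsto_const_nhds (x := c)).sub hZlim) hg.norm.isBoundedUnder_le ?_
  filter_upwards [hZ, hpZ.eventually_ne hpc] with r ⟨hd, hZc, hode⟩ hpr
  refine ⟨hd.const_sub c, ?_, sub_pos.2 hZc⟩
  rw [Function.comp_apply] at hpr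
  field_simp
  linear_combination -hode

theorem Polynomial.exists_eq_X_sub_C_mul_of_eval_derivative {R : Type*} [CommRing R]
    {p q : R[X]} {a : R} (hp : p.eval a = 0) (hq : (derivative p).eval a = q.eval a) :
    ∃ t : R[X], p = (X - C a) * (q + (X - C a) * t) := by
  set s := p /ₘ (X - C a)
  have hs : (X - C a) * s = p := mul_divByMonic_eq_iff_isRoot.2 hp
  have hsq : (s - q).IsRoot a := by
    rw [← hs, derivative_mul] at hq
    simpa [sub_eq_zero] using hq
  refine ⟨(s - q) /ₘ (X - C a), ?_⟩
  rw [mul_divByMonic_eq_iff_isRoot.2 hsq, add_sub_cancel, hs]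

theorem exists_eq_X_sub_C_mul_of_eval_one_div_eq_zero {P Q Phat Qhat : ℝ[X]} {n : ℕ} {k c : ℝ}
    (hc : c ≠ 0) (hQ' : ∀ y, (derivative Q).eval y = k * y * P.eval y)
    (hQc : Q.eval (1 / c) = 0)
    (hPhat : ∀ x : ℝ, x ≠ 0 → Phat.eval x = x ^ n * P.eval (1 / x))
    (hQhat : ∀ x : ℝ, x ≠ 0 → Qhat.eval x = x ^ (n + 2) * Q.eval (1 / x)) :
    ∃ T : ℝ[X], Qhat = (X - C c) * (C (-(k / c)) * Phat + (X - C c) * T) := by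
  refine Polynomial.exists_eq_X_sub_C_mul_of_eval_derivative
    (by rw [hQhat c hc, hQc, mul_zero]) ?_
  have hd : HasDerivAt (fun x => x ^ (n + 2) * Q.eval (1 / x))
      ((n + 2 : ℕ) * c ^ (n + 1) * Q.eval (1 / c)
        + c ^ (n + 2) * ((derivative Q).eval (1 / c) * -(c ^ 2)⁻¹)) c := by
    have hinv : HasDerivAt (fun x : ℝ => 1 / x) (-(c ^ 2)⁻¹) c := by
      simpa only [one_div] using hasDerivAt_inv hc
    exact (hasDerivAt_pow (n + 2) c).mul ((Q.hasDerivAt (1 / c)).comp c hinv)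
  have hQhat_eq : (fun x => Qhat.eval x) =ᶠ[𝓝 c] fun x => x ^ (n + 2) * Q.eval (1 / x) := by
    filter_upwards [eventually_ne_nhds hc] with x hx using hQhat x hx
  rw [(Qhat.hasDerivAt c).unique (hd.congr_of_eventuallyEq hQhat_eq), hQc, hQ', eval_mul, eval_C,
    hPhat c hc]
  field_simp
  ring

theorem stmt_9_general (m : ℕ) (hm : 2 ≤ m)
    (lam : Fin (m - 1) → ℝ) (hlt : ∀ i, lam i < 1)
    (P Q Phat Qhat : Polynomial ℝ)
    (hP : P = ∏ i : Fin (m - 1), (X - C (2 * lam i / ((m : ℝ) + 1))))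
    (hQder : ∀ y : ℝ, (derivative Q).eval y = ((m : ℝ) + 1) * y * P.eval y)
    (hQval : Q.eval (2 / ((m : ℝ) + 1)) = 0)
    (hPhat : ∀ x : ℝ, x ≠ 0 → Phat.eval x = x ^ (m - 1) * P.eval (1 / x))
    (hQhat : ∀ x : ℝ, x ≠ 0 → Qhat.eval x = x ^ (m + 1) * Q.eval (1 / x))
    (Z : ℝ → ℝ)
    (hODE : ∀ r ∈ Ioc (0 : ℝ) 1,
      r * deriv Z r * Phat.eval (Z r) + Qhat.eval (Z r) = 0)
    (hZ' : ∀ r ∈ Ioc (0 : ℝ) 1, deriv Z r < 0)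
    (hZlim : Tendsto Z (𝓝[>] (0 : ℝ)) (𝓝 (((m : ℝ) + 1) / 2))) :
    (∀ r ∈ Ioc (0 : ℝ) 1, (Z r - ((m : ℝ) + 1) / 2) / r ^ 2 < 0) ∧
    (∃ a : ℝ, a < 0 ∧
      Tendsto (fun r => (Z r - ((m : ℝ) + 1) / 2) / r ^ 2) (𝓝[>] (0 : ℝ)) (𝓝 a)) := by
  set c : ℝ := ((m : ℝ) + 1) / 2 with hc
  have hc0 : 0 < c := by positivity
  have hZc : ∀ r ∈ Ioc (0 : ℝ) 1, Z r < c := fun r hr =>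
    lt_of_tendsto_nhdsGT_of_deriv_neg hZ' hZlim hr
  refine ⟨fun r hr => div_neg_of_neg_of_pos (sub_neg.2 (hZc r hr)) (by positivity [hr.1]), ?_⟩
  have hPc : Phat.eval c ≠ 0 := by
    rw [hPhat c hc0.ne', hP, eval_prod]
    refine mul_ne_zero (pow_ne_zero _ hc0.ne') (Finset.prod_ne_zero_iff.2 fun i _ => ?_)
    rw [hc, eval_sub, eval_X, eval_C]
    field_simp
    exact (div_pos (by linarith [hlt i]) (by positivity)).ne'
  obtain ⟨T, hT⟩ := exists_eq_X_sub_C_mul_of_eval_one_div_eq_zero (n := m - 1)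
    (k := (m : ℝ) + 1) hc0.ne' hQder (by rwa [one_div_div]) hPhat
    (by rwa [show m - 1 + 2 = m + 1 by omega])
  have hk : ((m : ℝ) + 1) / c = 2 := by rw [hc]; field_simp
  obtain ⟨a, ha, hlim⟩ := exists_pos_tendsto_sub_div_sq Phat.continuousAt T.continuousAt hPc
    hZlim (Z' := deriv Z) <| by
    filter_upwards [Ioc_mem_nhdsGT (zero_lt_one' ℝ)] with r hr
    refine ⟨(differentiableAt_of_deriv_ne_zero (hZ' r hr).ne).hasDerivAt, hZc r hr, ?_⟩
    simpa [hT, hk] using hODE r hr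
  exact ⟨-a, neg_neg_of_pos ha, hlim.neg.congr fun r => by ring⟩

/-- Lemma 3.11 of the paper: W(r) = (Z(r) − (m+1)/2)/r² is
negative on (0,1] and has a negative limit as r → 0⁺. -/
theorem stmt_9 (m : ℕ) (hm : 2 ≤ m)
    (lam : Fin (m - 1) → ℝ) (hmono : Monotone lam) (hlt : ∀ i, lam i < 1)
    (P Q Phat Qhat : Polynomial ℝ)
    (hP : P = ∏ i : Fin (m - 1), (X - C (2 * lam i / ((m : ℝ) + 1))))
    (hQder : ∀ y : ℝ, (derivative Q).eval y = ((m : ℝ) + 1) * y * P.eval y)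
    (hQval : Q.eval (2 / ((m : ℝ) + 1)) = 0)
    (hPhat : ∀ x : ℝ, x ≠ 0 → Phat.eval x = x ^ (m - 1) * P.eval (1 / x))
    (hQhat : ∀ x : ℝ, x ≠ 0 → Qhat.eval x = x ^ (m + 1) * Q.eval (1 / x))
    (Z : ℝ → ℝ)
    (hZan : ∃ c d : ℝ, Ioc (0 : ℝ) 1 ⊆ Ioo c d ∧ AnalyticOnNhd ℝ Z (Ioo c d))
    (hODE : ∀ r ∈ Ioc (0 : ℝ) 1,
      r * deriv Z r * Phat.eval (Z r) + Qhat.eval (Z r) = 0)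
    (hZ1 : Z 1 = 0)
    (hZ' : ∀ r ∈ Ioc (0 : ℝ) 1, deriv Z r < 0)
    (hZlim : Tendsto Z (𝓝[>] (0 : ℝ)) (𝓝 (((m : ℝ) + 1) / 2))) :
    (∀ r ∈ Ioc (0 : ℝ) 1, (Z r - ((m : ℝ) + 1) / 2) / r ^ 2 < 0) ∧
    (∃ a : ℝ, a < 0 ∧
      Tendsto (fun r => (Z r - ((m : ℝ) + 1) / 2) / r ^ 2) (𝓝[>] (0 : ℝ)) (𝓝 a)) :=
  stmt_9_general m hm lam hlt P Q Phat Qhat hP hQder hQval hPhat hQhat Z hODE hZ' hZlim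
end

section
/- Set λ = (m+1)/2, let g be the unique real polynomial with Q̂(x) = (x − λ)·g(x), and let a < 0 be any real number. Since 2·P̂(λ) + g(λ) = 0, the expression (2·P̂(λ + s) + g(λ + s)) is a polynomial in s with zero constant term, so h(r,T) := (2·P̂(λ + r²T) + g(λ + r²T))/r is a polynomial function of (r,T). Then there exist ε > 0 and a real analytic function T₀ : (−ε, ε) → ℝ with T₀(0) = a satisfying T₀'(r) = −h(r, T₀(r))·T₀(r)/P̂(λ + r²·T₀(r)) for all r ∈ (−ε, ε); any real analytic solution of this initial value problem on an open interval around 0 agrees with T₀ on a neighborhood of 0; and T₀ is an even function on (−ε, ε). -/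
/-!
On writing `p(s) = P̂(λ + s)`, the equation reads `T' = -r T² S(r² T) / p(r² T)`, whose right-hand
side is analytic near `(0, a)`; uniqueness is therefore the Picard–Lindelöf uniqueness theorem.
For existence, the ansatz `T(r) = a D(a r²)` reduces the equation to `D' = -D² H(s D)` with
`H = S / 2p`, and this holds as soon as `ψ(s) = s D(s)` satisfies `ψ(s) exp(B(ψ(s))) = s`, where
`B` is a primitive of `H / (1 - u H)`. So `ψ` is the local inverse of the analytic map
`u ↦ u exp(B(u))`, which has derivative `1` at `0`; hence `T` is analytic, and it is even by
construction.
-/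

open Polynomial Set Filter Topology

namespace FormalMultilinearSeries

variable (p : FormalMultilinearSeries ℝ ℝ ℝ)

noncomputable def primitive (x : ℝ) : ℝ := ∑' n, p.coeff n / (n + 1) * x ^ (n + 1)

@[simp]
theorem primitive_zero : p.primitive 0 = 0 := by simp [primitive]

theorem analyticAt_primitive (hp : 0 < p.radius) : AnalyticAt ℝ p.primitive 0 := by
  set q := ofScalars ℝ fun n => p.coeff n / (n + 1)
  have hq : 0 < q.radius := by
    refine hp.trans_le (radius_le_of_le fun n => ?_)
    rw [ofScalars_norm, norm_apply_eq_norm_coef, norm_div]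
    exact div_le_self (norm_nonneg _) (by rw [Real.norm_of_nonneg (by positivity)]; simp)
  have hsum : p.primitive = fun x => x * q.sum x := by
    funext x
    rw [primitive, ← ofScalarsSum, ofScalars_sum_eq, ← tsum_mul_left]
    refine tsum_congr fun n => ?_
    rw [smul_eq_mul, pow_succ]
    ring
  rw [hsum]
  exact analyticAt_id.mul (q.hasFPowerSeriesOnBall hq).analyticAt

variable {p} in
theorem _root_.HasFPowerSeriesOnBall.hasDerivAt_primitive {f : ℝ → ℝ} {x₀ : ℝ} {r : ENNReal}
    (hf : HasFPowerSeriesOnBall f p x₀ r) {y : ℝ} (hy : y ∈ Metric.eball 0 r) :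
    HasDerivAt p.primitive (f (x₀ + y)) y := by
  obtain ⟨ρ, hyρ, hρr⟩ := ENNReal.lt_iff_exists_nnreal_btwn.1 (Metric.mem_eball.1 hy)
  have hyρ : ‖y‖ < ρ := by rw [edist_zero_right] at hyρ; exact_mod_cast hyρ
  have hsum : Summable fun n => ‖p n‖ * (ρ : ℝ) ^ n :=
    p.summable_norm_mul_pow (hρr.trans_le hf.r_le)
  have hderiv : ∀ n z, HasDerivAt (fun x : ℝ => p.coeff n / (n + 1) * x ^ (n + 1))
      (p.coeff n * z ^ n) z := fun n z => by
    refine ((hasDerivAt_pow (n + 1) z).const_mul (p.coeff n / (n + 1))).congr_deriv ?_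
    rw [Nat.add_sub_cancel]
    push_cast
    field_simp
  have hbound : ∀ n z, z ∈ Metric.ball (0 : ℝ) ρ → ‖p.coeff n * z ^ n‖ ≤ ‖p n‖ * (ρ : ℝ) ^ n :=
    fun n z hz => by
      rw [norm_mul, norm_pow, norm_apply_eq_norm_coef]
      gcongr
      exact (mem_ball_zero_iff.1 hz).le
  have hf_eq : ∑' n, p.coeff n * y ^ n = f (x₀ + y) := by
    have := hf.hasSum hy
    simp only [apply_eq_pow_smul_coeff, smul_eq_mul] at this
    simpa only [mul_comm] using this.tsum_eq
  rw [← hf_eq]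
  exact hasDerivAt_tsum_of_isPreconnected hsum Metric.isOpen_ball
    (convex_ball 0 (ρ : ℝ)).isPreconnected (fun n z _ => hderiv n z) hbound
    (Metric.mem_ball_self ((norm_nonneg y).trans_lt hyρ)) (by simp) (mem_ball_zero_iff.2 hyρ)

end FormalMultilinearSeries

theorem AnalyticAt.exists_primitive {f : ℝ → ℝ} {x₀ : ℝ} (hf : AnalyticAt ℝ f x₀) :
    ∃ F : ℝ → ℝ, AnalyticAt ℝ F x₀ ∧ F x₀ = 0 ∧ ∀ᶠ x in 𝓝 x₀, HasDerivAt F (f x) x := by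
  obtain ⟨p, r, hp⟩ := hf
  refine ⟨fun x => p.primitive (x - x₀), ?_, by simp, ?_⟩
  · exact (p.analyticAt_primitive (hp.r_pos.trans_le hp.r_le)).comp_of_eq
      (analyticAt_id.sub analyticAt_const) (sub_self x₀)
  · filter_upwards [Metric.eball_mem_nhds x₀ hp.r_pos] with x hx
    have hx : x - x₀ ∈ Metric.eball 0 r := by
      rwa [Metric.mem_eball, edist_zero_right, ← edist_eq_enorm_sub, ← Metric.mem_eball]
    simpa using (hp.hasDerivAt_primitive hx).comp_sub_const x x₀

theorem ODE_solution_unique_of_contDiffAt {E : Type*} [NormedAddCommGroup E] [NormedSpace ℝ E]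
    {V : ℝ × E → E} {f g : ℝ → E} {t₀ : ℝ} (hV : ContDiffAt ℝ 1 V (t₀, f t₀))
    (hf : ∀ᶠ t in 𝓝 t₀, HasDerivAt f (V (t, f t)) t)
    (hg : ∀ᶠ t in 𝓝 t₀, HasDerivAt g (V (t, g t)) t) (heq : f t₀ = g t₀) : f =ᶠ[𝓝 t₀] g := by
  obtain ⟨K, U, hU, hlip⟩ := hV.exists_lipschitzOnWith
  have hmem : ∀ {h : ℝ → E}, h t₀ = f t₀ → ContinuousAt h t₀ → ∀ᶠ t in 𝓝 t₀, (t, h t) ∈ U :=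
    fun hh hc => (continuousAt_id.prodMk hc).eventually_mem (by simpa [hh] using hU)
  refine ODE_solution_unique_of_eventually (v := fun t x => V (t, x))
    (s := fun t => {x | (t, x) ∈ U}) (.of_forall fun t x hx y hy => by simpa [Prod.edist_eq] using hlip hx hy)
    (hf.and (hmem rfl hf.self_of_nhds.continuousAt))
    (hg.and (hmem heq.symm hg.self_of_nhds.continuousAt)) heq

theorem exists_Ioo_of_eventually_nhds_zero {p : ℝ → Prop} (h : ∀ᶠ x in 𝓝 0, p x) :
    ∃ ε > 0, ∀ x ∈ Ioo (-ε) ε, p x := by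
  obtain ⟨ε, hε, h⟩ := (nhds_basis_Ioo_pos (0 : ℝ)).eventually_iff.1 h
  exact ⟨ε, hε, by simpa using h⟩

theorem exists_eqOn_Ioo_of_deriv_eq {V : ℝ × ℝ → ℝ} {f g : ℝ → ℝ} {ε ε' : ℝ} (hε : 0 < ε)
    (hε' : 0 < ε') (hV : ContDiffAt ℝ 1 V (0, f 0))
    (hf : ∀ r ∈ Ioo (-ε) ε, DifferentiableAt ℝ f r ∧ deriv f r = V (r, f r))
    (hg : ∀ r ∈ Ioo (-ε') ε', DifferentiableAt ℝ g r ∧ deriv g r = V (r, g r))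
    (h0 : f 0 = g 0) : ∃ δ > 0, EqOn f g (Ioo (-δ) δ) := by
  have hsol : ∀ {h : ℝ → ℝ} {ε : ℝ}, 0 < ε →
      (∀ r ∈ Ioo (-ε) ε, DifferentiableAt ℝ h r ∧ deriv h r = V (r, h r)) →
      ∀ᶠ r in 𝓝 0, HasDerivAt h (V (r, h r)) r := fun hε hh => by
    filter_upwards [Ioo_mem_nhds (neg_neg_iff_pos.2 hε) hε] with r hr
    exact (hh r hr).1.hasDerivAt.congr_deriv (hh r hr).2
  exact exists_Ioo_of_eventually_nhds_zero
    (ODE_solution_unique_of_contDiffAt hV (hsol hε hf) (hsol hε' hg) h0)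

theorem AnalyticAt.exists_analyticAt_mul_exp_comp_mul_eq_one {B : ℝ → ℝ}
    (hB : AnalyticAt ℝ B 0) :
    ∃ D : ℝ → ℝ, AnalyticAt ℝ D 0 ∧ ∀ᶠ s in 𝓝 0, D s * Real.exp (B (s * D s)) = 1 := by
  set φ : ℝ → ℝ := fun u => u * Real.exp (B u)
  have hφ : AnalyticAt ℝ φ 0 := analyticAt_id.mul hB.rexp
  have hφ0 : φ 0 = 0 := by simp [φ]
  have hφ' : deriv φ 0 = Real.exp (B 0) := by
    refine ((hasDerivAt_id 0).mul hB.differentiableAt.hasDerivAt.exp).deriv.trans ?_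
    simp
  have hφ'0 : deriv φ 0 ≠ 0 := hφ' ▸ Real.exp_ne_zero _
  set ψ := hφ.hasStrictDerivAt.localInverse φ (deriv φ 0) 0 hφ'0
  have hψ : AnalyticAt ℝ ψ 0 := hφ0 ▸ hφ.analyticAt_localInverse hφ'0
  have hψ0 : ψ 0 = 0 := by
    have : ψ (φ 0) = 0 := HasStrictFDerivAt.localInverse_apply_image _
    rwa [hφ0] at this
  have hφψ : ∀ᶠ s in 𝓝 0, φ (ψ s) = s := hφ0 ▸ HasStrictDerivAt.eventually_right_inverse ..
  set D := dslope ψ 0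
  have hψD : ψ = fun s => s * D s := funext fun s => by
    simpa using (sub_smul_dslope_of_zero hψ0 s).symm
  have hD0 : D 0 * Real.exp (B 0) = 1 := by
    have := (hφ.hasStrictDerivAt.to_localInverse hφ'0).hasDerivAt.deriv
    rw [hφ0] at this
    show dslope ψ 0 0 * _ = 1
    rw [dslope_same, this, hφ', inv_mul_cancel₀ (Real.exp_ne_zero _)]
  refine ⟨D, ?_, ?_⟩
  · obtain ⟨p, hp⟩ := hψ
    exact ⟨_, hp.has_fpower_series_dslope_fslope⟩
  · filter_upwards [hφψ] with s hs
    rcases eq_or_ne s 0 with rfl | hs0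
    · simpa using hD0
    · refine mul_left_cancel₀ hs0 ?_
      rw [mul_one, ← mul_assoc]
      simpa [φ, hψD] using hs

theorem exists_analyticAt_hasDerivAt_neg_sq_mul {H : ℝ → ℝ} (hH : AnalyticAt ℝ H 0) :
    ∃ D : ℝ → ℝ, AnalyticAt ℝ D 0 ∧ D 0 = 1 ∧
      ∀ᶠ s in 𝓝 0, HasDerivAt D (-(D s ^ 2 * H (s * D s))) s := by
  -- `B' = H / (1 - u H)` is what makes the derivative of `D s * exp (B (s * D s)) = 1`
  -- read `D' = -D² H (s D)`.
  have hden : AnalyticAt ℝ (fun u => 1 - u * H u) 0 := analyticAt_const.sub (analyticAt_id.mul hH)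
  obtain ⟨B, hB, hB0, hB'⟩ := (hH.div hden (by simp)).exists_primitive
  obtain ⟨D, hD, hDB⟩ := hB.exists_analyticAt_mul_exp_comp_mul_eq_one
  have hlim : Tendsto (fun s => s * D s) (𝓝 0) (𝓝 0) := by
    simpa only [id_eq, zero_mul] using tendsto_id.mul hD.continuousAt.tendsto
  refine ⟨D, hD, by simpa [hB0] using hDB.self_of_nhds, ?_⟩
  filter_upwards [hDB.eventually_nhds, hD.eventually_analyticAt, hlim.eventually hB',
    hlim.eventually (hden.continuousAt.eventually_ne (y := 0) (by simp))] with s hks hDs hBs hne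
  have hd := hDs.differentiableAt.hasDerivAt
  have hk0 : deriv D s * Real.exp (B (s * D s)) + D s * (Real.exp (B (s * D s)) *
      (H (s * D s) / (1 - s * D s * H (s * D s)) * (1 * D s + s * deriv D s))) = 0 :=
    (hd.mul ((hBs.comp s ((hasDerivAt_id s).mul hd)).exp)).unique
      ((hasDerivAt_const s (1 : ℝ)).congr_of_eventuallyEq hks)
  refine hd.congr_deriv ?_
  field_simp at hk0
  rw [mul_zero, mul_eq_zero, or_iff_right (Real.exp_ne_zero _)] at hk0
  linear_combination hk0

theorem exists_even_hasDerivAt_neg_mul_sq_mul {H : ℝ → ℝ} (hH : AnalyticAt ℝ H 0) (a : ℝ) :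
    ∃ T : ℝ → ℝ, T 0 = a ∧ (∀ r, T (-r) = T r) ∧
      ∀ᶠ r in 𝓝 0, AnalyticAt ℝ T r ∧ HasDerivAt T (-(2 * r * T r ^ 2 * H (r ^ 2 * T r))) r := by
  obtain ⟨D, hD, hD0, hD'⟩ := exists_analyticAt_hasDerivAt_neg_sq_mul hH
  have hlim : Tendsto (fun r : ℝ => a * r ^ 2) (𝓝 0) (𝓝 0) :=
    (by fun_prop : Continuous fun r : ℝ => a * r ^ 2).tendsto' 0 0 (by simp)
  refine ⟨fun r => a * D (a * r ^ 2), by simp [hD0], fun r => by simp, ?_⟩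
  filter_upwards [hlim.eventually hD.eventually_analyticAt, hlim.eventually hD'] with r hDr hD'r
  refine ⟨analyticAt_const.mul (hDr.comp (f := fun r : ℝ => a * r ^ 2) (by fun_prop)), ?_⟩
  have harg : r ^ 2 * (a * D (a * r ^ 2)) = a * r ^ 2 * D (a * r ^ 2) := by ring
  rw [harg]
  exact ((hD'r.comp r ((hasDerivAt_pow 2 r).const_mul a)).const_mul a).congr_deriv (by ring)

attribute [local fun_prop] analyticAt_fst analyticAt_snd

@[fun_prop]
theorem Polynomial.analyticAt_eval (p : ℝ[X]) (x : ℝ) : AnalyticAt ℝ (fun y => p.eval y) x :=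
  AnalyticOnNhd.eval_polynomial p x trivial

theorem stmt_10_general (m : ℕ)
    (Phat Qhat : Polynomial ℝ)
    (hPhatpos : 0 < Phat.eval (((m : ℝ) + 1) / 2))
    (hQhatder : (derivative Qhat).eval (((m : ℝ) + 1) / 2) =
      -2 * Phat.eval (((m : ℝ) + 1) / 2))
    (g : Polynomial ℝ)
    (hg : Qhat = (X - C (((m : ℝ) + 1) / 2)) * g)
    (a : ℝ) :
    2 * Phat.eval (((m : ℝ) + 1) / 2) + g.eval (((m : ℝ) + 1) / 2) = 0 ∧
    ∃ S : Polynomial ℝ,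
      2 * Phat.comp (C (((m : ℝ) + 1) / 2) + X) +
          g.comp (C (((m : ℝ) + 1) / 2) + X) = X * S ∧
      ∃ ε > (0 : ℝ), ∃ T₀ : ℝ → ℝ,
        AnalyticOnNhd ℝ T₀ (Ioo (-ε) ε) ∧
        T₀ 0 = a ∧
        (∀ r ∈ Ioo (-ε) ε, deriv T₀ r =
          -(r * T₀ r * S.eval (r ^ 2 * T₀ r)) * T₀ r /
            Phat.eval (((m : ℝ) + 1) / 2 + r ^ 2 * T₀ r)) ∧
        (∀ ε' > (0 : ℝ), ∀ T : ℝ → ℝ,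
          AnalyticOnNhd ℝ T (Ioo (-ε') ε') →
          T 0 = a →
          (∀ r ∈ Ioo (-ε') ε', deriv T r =
            -(r * T r * S.eval (r ^ 2 * T r)) * T r /
              Phat.eval (((m : ℝ) + 1) / 2 + r ^ 2 * T r)) →
          ∃ δ > (0 : ℝ), EqOn T T₀ (Ioo (-δ) δ)) ∧
        (∀ r ∈ Ioo (-ε) ε, T₀ (-r) = T₀ r) := by
  set L : ℝ := ((m : ℝ) + 1) / 2
  have hgL : g.eval L = -2 * Phat.eval L := by
    rw [← hQhatder, hg, derivative_mul]
    simp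
  refine ⟨by rw [hgL]; ring, ?_⟩
  obtain ⟨S, hS⟩ : X ∣ 2 * Phat.comp (C L + X) + g.comp (C L + X) :=
    X_dvd_iff.2 (by simp [coeff_zero_eq_eval_zero, hgL])
  refine ⟨S, hS, ?_⟩
  set V : ℝ × ℝ → ℝ := fun z =>
    -(z.1 * z.2 * S.eval (z.1 ^ 2 * z.2)) * z.2 / Phat.eval (L + z.1 ^ 2 * z.2)
  have hV : ∀ b, ContDiffAt ℝ 1 V (0, b) := fun b =>
    (AnalyticAt.div (by fun_prop) (by fun_prop) (by simpa using hPhatpos.ne')).contDiffAt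
  have hH : AnalyticAt ℝ (fun s => S.eval s / (2 * Phat.eval (L + s))) 0 :=
    AnalyticAt.div (by fun_prop) (by fun_prop) (by simpa using hPhatpos.ne')
  obtain ⟨T₀, hT₀0, heven, hT₀⟩ := exists_even_hasDerivAt_neg_mul_sq_mul hH a
  obtain ⟨ε, hε, hT₀ε⟩ := exists_Ioo_of_eventually_nhds_zero hT₀
  have hode : ∀ r ∈ Ioo (-ε) ε, HasDerivAt T₀ (V (r, T₀ r)) r := fun r hr =>
    (hT₀ε r hr).2.congr_deriv (by simp only [V]; ring)
  refine ⟨ε, hε, T₀, fun r hr => (hT₀ε r hr).1, hT₀0, fun r hr => (hode r hr).deriv,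
    fun ε' hε' T hTan hT0 hTode => ?_, fun r _ => heven r⟩
  exact exists_eqOn_Ioo_of_deriv_eq hε' hε (hV _)
    (fun r hr => ⟨(hTan r hr).differentiableAt, hTode r hr⟩)
    (fun r hr => ⟨(hode r hr).differentiableAt, (hode r hr).deriv⟩) (hT0.trans hT₀0.symm)

/-- Lemma 3.12 of the paper: existence, local uniqueness and
evenness of the real analytic solution T₀ of the initial value problem
T' = −h(r,T)·T/P̂(λ + r²T), T(0) = a, where λ = (m+1)/2 and
h(r,T) = (2·P̂(λ+r²T) + g(λ+r²T))/r.  Since 2·P̂(λ)+g(λ) = 0, the polynomial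
2·P̂(λ+s)+g(λ+s) in s has zero constant term, i.e. equals s·S(s) for a
polynomial S, so that h(r,T) = r·T·S(r²T) is a polynomial function of (r,T). -/
theorem stmt_10 (m : ℕ) (hm : 2 ≤ m)
    (lam : Fin (m - 1) → ℝ) (hmono : Monotone lam) (hlt : ∀ i, lam i < 1)
    (P Q Phat Qhat : Polynomial ℝ)
    (hP : P = ∏ i : Fin (m - 1), (X - C (2 * lam i / ((m : ℝ) + 1))))
    (hQder : ∀ y : ℝ, (derivative Q).eval y = ((m : ℝ) + 1) * y * P.eval y)
    (hQval : Q.eval (2 / ((m : ℝ) + 1)) = 0)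
    (hPhat : ∀ x : ℝ, x ≠ 0 → Phat.eval x = x ^ (m - 1) * P.eval (1 / x))
    (hQhat : ∀ x : ℝ, x ≠ 0 → Qhat.eval x = x ^ (m + 1) * Q.eval (1 / x))
    (hQhatval : Qhat.eval (((m : ℝ) + 1) / 2) = 0)
    (hPhatpos : 0 < Phat.eval (((m : ℝ) + 1) / 2))
    (hQhatder : (derivative Qhat).eval (((m : ℝ) + 1) / 2) =
      -2 * Phat.eval (((m : ℝ) + 1) / 2))
    (g : Polynomial ℝ)
    (hg : Qhat = (X - C (((m : ℝ) + 1) / 2)) * g)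
    (a : ℝ) (ha : a < 0) :
    2 * Phat.eval (((m : ℝ) + 1) / 2) + g.eval (((m : ℝ) + 1) / 2) = 0 ∧
    ∃ S : Polynomial ℝ,
      2 * Phat.comp (C (((m : ℝ) + 1) / 2) + X) +
          g.comp (C (((m : ℝ) + 1) / 2) + X) = X * S ∧
      ∃ ε > (0 : ℝ), ∃ T₀ : ℝ → ℝ,
        AnalyticOnNhd ℝ T₀ (Ioo (-ε) ε) ∧
        T₀ 0 = a ∧
        (∀ r ∈ Ioo (-ε) ε, deriv T₀ r =
          -(r * T₀ r * S.eval (r ^ 2 * T₀ r)) * T₀ r /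
            Phat.eval (((m : ℝ) + 1) / 2 + r ^ 2 * T₀ r)) ∧
        (∀ ε' > (0 : ℝ), ∀ T : ℝ → ℝ,
          AnalyticOnNhd ℝ T (Ioo (-ε') ε') →
          T 0 = a →
          (∀ r ∈ Ioo (-ε') ε', deriv T r =
            -(r * T r * S.eval (r ^ 2 * T r)) * T r /
              Phat.eval (((m : ℝ) + 1) / 2 + r ^ 2 * T r)) →
          ∃ δ > (0 : ℝ), EqOn T T₀ (Ioo (-δ) δ)) ∧
        (∀ r ∈ Ioo (-ε) ε, T₀ (-r) = T₀ r) :=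
  stmt_10_general m Phat Qhat hPhatpos hQhatder g hg a
end

section
/- Set λ = (m+1)/2, let W(r) = (Z(r) − λ)/r² for r ∈ (0,1] with Z as in the context, let a = lim_{r→0⁺} W(r) (which exists and is negative), and let T₀ be the real analytic solution near 0, with T₀(0) = a, of the initial value problem T'(r) = −h(r, T(r))·T(r)/P̂(λ + r²·T(r)), where h(r,T) is the polynomial function equal to (2·P̂(λ + r²T) + g(λ + r²T))/r for r ≠ 0 and g is the polynomial with Q̂(x) = (x − λ)·g(x). Then there exists ε' > 0 such that W(r) = T₀(r) for all r ∈ (0, ε'). -/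
/-!
Write `Z r = L + r ^ 2 * W r` with `L = (m + 1) / 2`. The equation for `Z` turns into the ODE
`W' = F (r, W)` for the rescaled field `F`, which is `C¹` near `(0, a)` because `P̂ L > 0`
(every root `2 λᵢ / (m + 1)` of `P` lies below `1 / L`). So `W` and `T₀` solve the same locally
Lipschitz ODE on some `(0, δ)` and both tend to `a` at `0⁺`. Grönwall's inequality gives
`|W t - T₀ t| ≤ |W s - T₀ s| * exp (K * (t - s))` for `0 < s < t`, and `s → 0⁺` forces
`W t = T₀ t`.
-/

open Polynomial Set Filter Topology
open scoped NNReal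

section ODE

variable {E : Type*} [NormedAddCommGroup E] [NormedSpace ℝ E]

theorem eqOn_Ioo_of_hasDerivAt_of_tendsto_dist {v : ℝ → E → E} {s : Set E} {K : ℝ≥0}
    {t₀ b : ℝ} {f g : ℝ → E}
    (hv : ∀ t ∈ Ioo t₀ b, LipschitzOnWith K (v t) s)
    (hf : ∀ t ∈ Ioo t₀ b, HasDerivAt f (v t (f t)) t) (hfs : ∀ t ∈ Ioo t₀ b, f t ∈ s)
    (hg : ∀ t ∈ Ioo t₀ b, HasDerivAt g (v t (g t)) t) (hgs : ∀ t ∈ Ioo t₀ b, g t ∈ s)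
    (hfg : Tendsto (fun t => dist (f t) (g t)) (𝓝[>] t₀) (𝓝 0)) :
    EqOn f g (Ioo t₀ b) := by
  intro t ht
  have hgronwall : ∀ u ∈ Ioo t₀ t,
      dist (f t) (g t) ≤ dist (f u) (g u) * Real.exp (K * (t - u)) := by
    intro u hu
    have hsub : Icc u t ⊆ Ioo t₀ b := Icc_subset_Ioo hu.1 ht.2
    have hsub' : Ico u t ⊆ Ioo t₀ b := Ico_subset_Icc_self.trans hsub
    exact dist_le_of_trajectories_ODE_of_mem (fun x hx => hv x (hsub' hx))
      (fun x hx => (hf x (hsub hx)).continuousAt.continuousWithinAt)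
      (fun x hx => (hf x (hsub' hx)).hasDerivWithinAt) (fun x hx => hfs x (hsub' hx))
      (fun x hx => (hg x (hsub hx)).continuousAt.continuousWithinAt)
      (fun x hx => (hg x (hsub' hx)).hasDerivWithinAt) (fun x hx => hgs x (hsub' hx))
      le_rfl t ⟨hu.2.le, le_rfl⟩
  have hbound :
      Tendsto (fun u => dist (f u) (g u) * Real.exp (K * (t - u))) (𝓝[>] t₀) (𝓝 0) := by
    have hexp : Tendsto (fun u => Real.exp (K * (t - u))) (𝓝[>] t₀)
        (𝓝 (Real.exp (K * (t - t₀)))) :=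
      (Continuous.tendsto (by fun_prop) t₀).mono_left nhdsWithin_le_nhds
    simpa using hfg.mul hexp
  refine dist_le_zero.mp (ge_of_tendsto hbound ?_)
  filter_upwards [Ioo_mem_nhdsGT ht.1] with u hu using hgronwall u hu

theorem eventuallyEq_nhdsGT_of_hasDerivAt_of_tendsto {v : ℝ × E → E} {t₀ : ℝ} {a : E}
    (hv : ContDiffAt ℝ 1 v (t₀, a)) {f g : ℝ → E}
    (hf : ∀ᶠ t in 𝓝[>] t₀, HasDerivAt f (v (t, f t)) t)
    (hg : ∀ᶠ t in 𝓝[>] t₀, HasDerivAt g (v (t, g t)) t)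
    (hfa : Tendsto f (𝓝[>] t₀) (𝓝 a)) (hga : Tendsto g (𝓝[>] t₀) (𝓝 a)) :
    f =ᶠ[𝓝[>] t₀] g := by
  obtain ⟨K, U, hU, hLip⟩ := hv.exists_lipschitzOnWith
  obtain ⟨ρ, hρ, hball⟩ := Metric.mem_nhds_iff.mp hU
  have hslice : ∀ t ∈ Metric.ball t₀ ρ,
      LipschitzOnWith K (fun w => v (t, w)) (Metric.ball a ρ) := by
    intro t ht
    simpa [Function.comp_def] using
      (hLip.mono hball).comp (LipschitzWith.prodMk_left t).lipschitzOnWith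
        (fun w hw => by rw [← ball_prod_same]; exact ⟨ht, hw⟩)
  have hnear : ∀ᶠ t in 𝓝[>] t₀, t ∈ Metric.ball t₀ ρ :=
    nhdsWithin_le_nhds (Metric.ball_mem_nhds t₀ hρ)
  have hfρ := hfa.eventually (Metric.ball_mem_nhds a hρ)
  have hgρ := hga.eventually (Metric.ball_mem_nhds a hρ)
  obtain ⟨b, hb, hall⟩ :=
    (nhdsGT_basis t₀).eventually_iff.mp (hnear.and (hf.and (hg.and (hfρ.and hgρ))))
  have hfg : Tendsto (fun t => dist (f t) (g t)) (𝓝[>] t₀) (𝓝 0) := by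
    simpa using hfa.dist hga
  filter_upwards [Ioo_mem_nhdsGT hb] with t ht
  exact eqOn_Ioo_of_hasDerivAt_of_tendsto_dist (v := fun t w => v (t, w))
    (fun t ht => hslice t (hall ht).1) (fun t ht => (hall ht).2.1) (fun t ht => (hall ht).2.2.2.1)
    (fun t ht => (hall ht).2.2.1) (fun t ht => (hall ht).2.2.2.2) hfg ht

end ODE

@[fun_prop]
lemma Polynomial.contDiff_eval (p : ℝ[X]) {n : WithTop ℕ∞} :
    ContDiff ℝ n (fun x : ℝ => p.eval x) := by
  simpa using p.contDiff_aeval (𝕜 := ℝ) n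

lemma Polynomial.eval_prod_X_sub_C_pos_s11 {ι : Type*} (s : Finset ι) {c : ι → ℝ} {y : ℝ}
    (h : ∀ i ∈ s, c i < y) : 0 < (∏ i ∈ s, (X - C (c i))).eval y := by
  rw [eval_prod]
  exact Finset.prod_pos fun i hi => by simpa using h i hi

/-- The right-hand side `-h(r, T) T / P̂(λ + r² T)`, where `h(r, T) = r T S(r² T)` by the
defining identity of `S`. -/
noncomputable def rescaledField (Phat S : ℝ[X]) (L : ℝ) (p : ℝ × ℝ) : ℝ :=
  -(p.1 * p.2 * S.eval (p.1 ^ 2 * p.2)) * p.2 / Phat.eval (L + p.1 ^ 2 * p.2)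

lemma contDiffAt_rescaledField {Phat S : ℝ[X]} {L : ℝ} {p : ℝ × ℝ}
    (hp : Phat.eval (L + p.1 ^ 2 * p.2) ≠ 0) : ContDiffAt ℝ 1 (rescaledField Phat S L) p := by
  unfold rescaledField
  fun_prop (disch := exact hp)

lemma hasDerivAt_div_sq_rescaledField {Z : ℝ → ℝ} {Phat Qhat g S : ℝ[X]} {L r z' : ℝ}
    (hg : Qhat = (X - C L) * g) (hS : 2 * Phat.comp (C L + X) + g.comp (C L + X) = X * S)
    (hr : r ≠ 0) (hZ : HasDerivAt Z z' r)
    (hode : r * z' * Phat.eval (Z r) + Qhat.eval (Z r) = 0) (hP : Phat.eval (Z r) ≠ 0) :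
    HasDerivAt (fun r => (Z r - L) / r ^ 2)
      (rescaledField Phat S L (r, (Z r - L) / r ^ 2)) r := by
  refine ((hZ.sub_const L).div (hasDerivAt_pow 2 r) (pow_ne_zero 2 hr)).congr_deriv ?_
  set w := (Z r - L) / r ^ 2
  have hzL : Z r - L = r ^ 2 * w := by simp only [w]; field_simp
  have hz : Z r = L + r ^ 2 * w := by linarith
  clear_value w
  have hQ : Qhat.eval (Z r) = r ^ 2 * w * g.eval (Z r) := by
    rw [hg, hz]; simp only [eval_mul, eval_sub, eval_X, eval_C]; ring
  have hSw : 2 * Phat.eval (Z r) + g.eval (Z r) = r ^ 2 * w * S.eval (r ^ 2 * w) := by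
    simpa [hz] using congrArg (eval (r ^ 2 * w)) hS
  rw [rescaledField, hzL, ← hz, div_eq_div_iff (by positivity) hP]
  linear_combination r * hode - r * hQ - r ^ 3 * w * hSw

lemma tendsto_nhdsGT_of_tendsto_sub_div_sq {Z : ℝ → ℝ} {L a : ℝ}
    (h : Tendsto (fun r => (Z r - L) / r ^ 2) (𝓝[>] 0) (𝓝 a)) :
    Tendsto Z (𝓝[>] 0) (𝓝 L) := by
  have hsq : Tendsto (fun r : ℝ => r ^ 2) (𝓝[>] 0) (𝓝 0) :=
    ((continuous_pow 2).tendsto' 0 0 (zero_pow two_ne_zero)).mono_left nhdsWithin_le_nhds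
  have hZ := tendsto_const_nhds (x := L) |>.add (hsq.mul h)
  rw [zero_mul, add_zero] at hZ
  refine hZ.congr' ?_
  filter_upwards [self_mem_nhdsWithin] with r (hr : 0 < r)
  field_simp
  ring

lemma eval_reversed_pos {m : ℕ} {lam : Fin (m - 1) → ℝ} (hlt : ∀ i, lam i < 1)
    {P Phat : ℝ[X]} (hP : P = ∏ i : Fin (m - 1), (X - C (2 * lam i / ((m : ℝ) + 1))))
    (hPhat : ∀ x : ℝ, x ≠ 0 → Phat.eval x = x ^ (m - 1) * P.eval (1 / x)) :
    0 < Phat.eval (((m : ℝ) + 1) / 2) := by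
  rw [hPhat _ (by positivity), one_div_div, hP]
  refine mul_pos (by positivity) (eval_prod_X_sub_C_pos_s11 _ fun i _ => ?_)
  gcongr
  linarith [hlt i]

theorem stmt_11_general (m : ℕ)
    (lam : Fin (m - 1) → ℝ) (hlt : ∀ i, lam i < 1)
    (P Phat Qhat : Polynomial ℝ)
    (hP : P = ∏ i : Fin (m - 1), (X - C (2 * lam i / ((m : ℝ) + 1))))
    (hPhat : ∀ x : ℝ, x ≠ 0 → Phat.eval x = x ^ (m - 1) * P.eval (1 / x))
    (Z : ℝ → ℝ)
    (hZan : ∃ c d : ℝ, Ioc (0 : ℝ) 1 ⊆ Ioo c d ∧ AnalyticOnNhd ℝ Z (Ioo c d))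
    (hODE : ∀ r ∈ Ioc (0 : ℝ) 1,
      r * deriv Z r * Phat.eval (Z r) + Qhat.eval (Z r) = 0)
    (g : Polynomial ℝ)
    (hg : Qhat = (X - C (((m : ℝ) + 1) / 2)) * g)
    (S : Polynomial ℝ)
    (hS : 2 * Phat.comp (C (((m : ℝ) + 1) / 2) + X) +
        g.comp (C (((m : ℝ) + 1) / 2) + X) = X * S)
    (a : ℝ)
    (hWlim : Tendsto (fun r => (Z r - ((m : ℝ) + 1) / 2) / r ^ 2)
      (𝓝[>] (0 : ℝ)) (𝓝 a))
    (ε : ℝ) (hε : 0 < ε) (T₀ : ℝ → ℝ)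
    (hT₀an : AnalyticOnNhd ℝ T₀ (Ioo (-ε) ε))
    (hT₀0 : T₀ 0 = a)
    (hT₀ODE : ∀ r ∈ Ioo (-ε) ε, deriv T₀ r =
      -(r * T₀ r * S.eval (r ^ 2 * T₀ r)) * T₀ r /
        Phat.eval (((m : ℝ) + 1) / 2 + r ^ 2 * T₀ r)) :
    ∃ ε' > (0 : ℝ), ∀ r ∈ Ioo (0 : ℝ) ε',
      (Z r - ((m : ℝ) + 1) / 2) / r ^ 2 = T₀ r := by
  set L := ((m : ℝ) + 1) / 2
  obtain ⟨c, d, hcd, hZan⟩ := hZan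
  have hPL : 0 < Phat.eval L := eval_reversed_pos hlt hP hPhat
  have hZL : Tendsto Z (𝓝[>] 0) (𝓝 L) := tendsto_nhdsGT_of_tendsto_sub_div_sq hWlim
  have hW : ∀ᶠ r in 𝓝[>] 0, HasDerivAt (fun r => (Z r - L) / r ^ 2)
      (rescaledField Phat S L (r, (Z r - L) / r ^ 2)) r := by
    have hPZ := ((Phat.continuous.tendsto L).comp hZL).eventually_ne hPL.ne'
    filter_upwards [Ioo_mem_nhdsGT one_pos, hPZ] with r hr hPr
    exact hasDerivAt_div_sq_rescaledField hg hS hr.1.ne'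
      (hZan r (hcd (Ioo_subset_Ioc_self hr))).differentiableAt.hasDerivAt
      (hODE r (Ioo_subset_Ioc_self hr)) hPr
  have hT₀ : ∀ᶠ r in 𝓝[>] 0, HasDerivAt T₀ (rescaledField Phat S L (r, T₀ r)) r := by
    filter_upwards [Ioo_mem_nhdsGT hε] with r hr
    have hr' : r ∈ Ioo (-ε) ε := ⟨by linarith [hr.1], hr.2⟩
    have hT₀r := (hT₀an r hr').differentiableAt.hasDerivAt
    rwa [hT₀ODE r hr'] at hT₀r
  have hT₀a : Tendsto T₀ (𝓝[>] 0) (𝓝 a) :=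
    hT₀0 ▸ (hT₀an 0 ⟨neg_lt_zero.mpr hε, hε⟩).continuousAt.tendsto.mono_left
      nhdsWithin_le_nhds
  have hv : ContDiffAt ℝ 1 (rescaledField Phat S L) (0, a) :=
    contDiffAt_rescaledField (by simpa using hPL.ne')
  exact (nhdsGT_basis 0).eventually_iff.mp
    (eventuallyEq_nhdsGT_of_hasDerivAt_of_tendsto hv hW hT₀ hWlim hT₀a)

/-- Lemma 3.13 of the paper: W = (Z − λ)/r² coincides with the
real analytic solution T₀ of the initial value problem near r = 0⁺. -/
theorem stmt_11 (m : ℕ) (hm : 2 ≤ m)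
    (lam : Fin (m - 1) → ℝ) (hmono : Monotone lam) (hlt : ∀ i, lam i < 1)
    (P Q Phat Qhat : Polynomial ℝ)
    (hP : P = ∏ i : Fin (m - 1), (X - C (2 * lam i / ((m : ℝ) + 1))))
    (hQder : ∀ y : ℝ, (derivative Q).eval y = ((m : ℝ) + 1) * y * P.eval y)
    (hQval : Q.eval (2 / ((m : ℝ) + 1)) = 0)
    (hPhat : ∀ x : ℝ, x ≠ 0 → Phat.eval x = x ^ (m - 1) * P.eval (1 / x))
    (hQhat : ∀ x : ℝ, x ≠ 0 → Qhat.eval x = x ^ (m + 1) * Q.eval (1 / x))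
    (Z : ℝ → ℝ)
    (hZan : ∃ c d : ℝ, Ioc (0 : ℝ) 1 ⊆ Ioo c d ∧ AnalyticOnNhd ℝ Z (Ioo c d))
    (hODE : ∀ r ∈ Ioc (0 : ℝ) 1,
      r * deriv Z r * Phat.eval (Z r) + Qhat.eval (Z r) = 0)
    (hZ1 : Z 1 = 0)
    (hZ' : ∀ r ∈ Ioc (0 : ℝ) 1, deriv Z r < 0)
    (g : Polynomial ℝ)
    (hg : Qhat = (X - C (((m : ℝ) + 1) / 2)) * g)
    (S : Polynomial ℝ)
    (hS : 2 * Phat.comp (C (((m : ℝ) + 1) / 2) + X) +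
        g.comp (C (((m : ℝ) + 1) / 2) + X) = X * S)
    (a : ℝ) (ha : a < 0)
    (hWlim : Tendsto (fun r => (Z r - ((m : ℝ) + 1) / 2) / r ^ 2)
      (𝓝[>] (0 : ℝ)) (𝓝 a))
    (ε : ℝ) (hε : 0 < ε) (T₀ : ℝ → ℝ)
    (hT₀an : AnalyticOnNhd ℝ T₀ (Ioo (-ε) ε))
    (hT₀0 : T₀ 0 = a)
    (hT₀ODE : ∀ r ∈ Ioo (-ε) ε, deriv T₀ r =
      -(r * T₀ r * S.eval (r ^ 2 * T₀ r)) * T₀ r /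
        Phat.eval (((m : ℝ) + 1) / 2 + r ^ 2 * T₀ r)) :
    ∃ ε' > (0 : ℝ), ∀ r ∈ Ioo (0 : ℝ) ε',
      (Z r - ((m : ℝ) + 1) / 2) / r ^ 2 = T₀ r :=
  stmt_11_general m lam hlt P Phat Qhat hP hPhat Z hZan hODE g hg S hS a hWlim ε hε T₀ hT₀an hT₀0
    hT₀ODE
end

section
/- Let μ = 2λ/(m+1), and let P̂(x) = (1 − μx)^{m−1} and Q̂(x) = ((m+1)/m)·(1 − μx)^m − (1/m)·(1 − μx)^{m+1} + c·x^{m+1}. Suppose J ⊆ ℝ is an interval and Z : J → ℝ is a differentiable function satisfying r·Z'(r)·P̂(Z(r)) + Q̂(Z(r)) = 0 for all r ∈ J, with 1 − μ·Z(r) ≠ 0 on J. Then the function ξ(r) := Z(r)/(1 − μ·Z(r)) satisfies r·ξ'(r) = −c·ξ(r)^{m+1} + a·ξ(r) − 1 for all r ∈ J. -/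
/-!
With `D = 1 - μ Z` one has `D + μ Z = 1`, so `ξ = Z / D` has `ξ' = Z' / D²` and `1 / D = 1 + μ ξ`.
Dividing the equation for `Z` by `D^{m+1}` therefore turns `r Z' P̂(Z)` into `r ξ'` and `Q̂(Z)`
into a polynomial in `ξ`; the coefficient of `ξ` comes out as `(m + 1) μ / m = 2λ / m = -a`.
-/

/-- The function `Q̂` of the equation, with `n` in place of `m`. -/
noncomputable def qHat (n : ℕ) (μ c x : ℝ) : ℝ :=
  ((n : ℝ) + 1) / n * (1 - μ * x) ^ n - 1 / n * (1 - μ * x) ^ (n + 1) + c * x ^ (n + 1)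

lemma HasDerivAt.div_one_sub_const_mul {Z : ℝ → ℝ} {z' μ r : ℝ} (hZ : HasDerivAt Z z' r)
    (hD : 1 - μ * Z r ≠ 0) :
    HasDerivAt (fun s => Z s / (1 - μ * Z s)) (z' / (1 - μ * Z r) ^ 2) r := by
  have hden : HasDerivAt (fun s => 1 - μ * Z s) (-(μ * z')) r := by
    simpa using (hZ.const_mul μ).const_sub 1
  refine (hZ.div hden hD).congr_deriv ?_
  congr 1
  ring

lemma qHat_div_pow {n : ℕ} (hn : n ≠ 0) {μ x : ℝ} (c : ℝ) (hD : 1 - μ * x ≠ 0) :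
    qHat n μ c x / (1 - μ * x) ^ (n + 1) =
      c * (x / (1 - μ * x)) ^ (n + 1) + ((n : ℝ) + 1) * μ / n * (x / (1 - μ * x)) + 1 := by
  have hn' : (n : ℝ) ≠ 0 := Nat.cast_ne_zero.mpr hn
  unfold qHat
  rw [div_pow, pow_succ (1 - μ * x) n]
  field_simp
  ring

lemma mul_div_sq_eq_neg_qHat_div_pow {n : ℕ} (hn : n ≠ 0) {μ c r z z' : ℝ}
    (hD : 1 - μ * z ≠ 0) (hODE : r * z' * (1 - μ * z) ^ (n - 1) + qHat n μ c z = 0) :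
    r * (z' / (1 - μ * z) ^ 2) = -(qHat n μ c z / (1 - μ * z) ^ (n + 1)) := by
  obtain ⟨k, rfl⟩ : ∃ k, n = k + 1 := ⟨n - 1, by omega⟩
  rw [Nat.add_sub_cancel] at hODE
  rw [eq_neg_of_add_eq_zero_right hODE]
  field_simp
  ring

theorem stmt_15_general (m : ℕ) (hm : 2 ≤ m) (lam : ℝ)
    (a c μ : ℝ)
    (hA : a = -2 * lam / m)
    (hμ : μ = 2 * lam / ((m : ℝ) + 1))
    (J : Set ℝ)
    (Z : ℝ → ℝ)
    (hdiff : ∀ r ∈ J, DifferentiableAt ℝ Z r)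
    (hODE : ∀ r ∈ J,
      r * deriv Z r * (1 - μ * Z r) ^ (m - 1) +
        (((m : ℝ) + 1) / m * (1 - μ * Z r) ^ m -
          1 / m * (1 - μ * Z r) ^ (m + 1) + c * Z r ^ (m + 1)) = 0)
    (hne : ∀ r ∈ J, 1 - μ * Z r ≠ 0) :
    ∀ r ∈ J,
      r * deriv (fun s => Z s / (1 - μ * Z s)) r =
        -c * (Z r / (1 - μ * Z r)) ^ (m + 1) + a * (Z r / (1 - μ * Z r)) - 1 := by
  intro r hr
  have hm0 : m ≠ 0 := by omega
  have ha : a = -(((m : ℝ) + 1) * μ / m) := by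
    rw [hA, hμ]
    field_simp
  rw [((hdiff r hr).hasDerivAt.div_one_sub_const_mul (hne r hr)).deriv,
    mul_div_sq_eq_neg_qHat_div_pow hm0 (hne r hr) (hODE r hr), qHat_div_pow hm0 c (hne r hr), ha]
  ring

/-- the change of variables ξ = Z/(1 − μZ) transforms the ODE
r·Z'·P̂(Z) + Q̂(Z) = 0, with P̂(x) = (1−μx)^{m−1} and
Q̂(x) = ((m+1)/m)(1−μx)^m − (1/m)(1−μx)^{m+1} + c·x^{m+1},
into r·ξ' = −c·ξ^{m+1} + a·ξ − 1. -/
theorem stmt_15 (m : ℕ) (hm : 2 ≤ m) (lam : ℝ) (hlam : lam < 0)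
    (a c μ : ℝ)
    (hA : a = -2 * lam / m)
    (hc : c = -((2 / ((m : ℝ) + 1)) ^ (m + 1) * (1 - lam) ^ m * (1 + lam / m)))
    (hμ : μ = 2 * lam / ((m : ℝ) + 1))
    (J : Set ℝ) (hJ : J.OrdConnected)
    (Z : ℝ → ℝ)
    (hdiff : ∀ r ∈ J, DifferentiableAt ℝ Z r)
    (hODE : ∀ r ∈ J,
      r * deriv Z r * (1 - μ * Z r) ^ (m - 1) +
        (((m : ℝ) + 1) / m * (1 - μ * Z r) ^ m -
          1 / m * (1 - μ * Z r) ^ (m + 1) + c * Z r ^ (m + 1)) = 0)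
    (hne : ∀ r ∈ J, 1 - μ * Z r ≠ 0) :
    ∀ r ∈ J,
      r * deriv (fun s => Z s / (1 - μ * Z s)) r =
        -c * (Z r / (1 - μ * Z r)) ^ (m + 1) + a * (Z r / (1 - μ * Z r)) - 1 :=
  stmt_15_general m hm lam a c μ hA hμ J Z hdiff hODE hne
end

section
/- Let m ≥ 2 be an integer, let a and c be real numbers, and let p, q be coprime real polynomials with q not identically zero and deg p ≥ 1, satisfying the polynomial identity X·q^{m−1}·(p'·q − p·q') = −c·p^{m+1} + a·p·q^m − q^{m+1} in ℝ[X]. Then c = 0. -/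
/-!
If `c ≠ 0`, then `q` divides `c p^{m+1}` (every other term of the identity is a multiple of `q`,
as `m ≥ 2`), so coprimality makes `q` a nonzero constant. The identity then has degree
`(m + 1) deg p` on the right but at most `deg p` on the left, since `X p'` has degree at most
`deg p`; this is impossible for `deg p ≥ 1`.
-/

open Polynomial

namespace Polynomial

theorem natDegree_X_mul_derivative_le {R : Type*} [CommSemiring R] (p : R[X]) :
    (X * derivative p).natDegree ≤ p.natDegree := by
  rcases Nat.eq_zero_or_pos p.natDegree with h | h
  · simp [derivative_of_natDegree_zero h]
  · calc (X * derivative p).natDegree ≤ X.natDegree + (derivative p).natDegree :=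
          natDegree_mul_le
      _ ≤ 1 + (p.natDegree - 1) := add_le_add natDegree_X_le (natDegree_derivative_le p)
      _ = p.natDegree := by omega

theorem natDegree_C_mul_pow_add_C_mul_add_C {K : Type*} [Field K] {p : K[X]} {k : ℕ}
    (hk : 1 < k) (hp : 0 < p.natDegree) (a b : K) {c : K} (hc : c ≠ 0) :
    (C c * p ^ k + C a * p + C b).natDegree = k * p.natDegree := by
  have hlead : (C c * p ^ k).natDegree = k * p.natDegree := by
    rw [natDegree_C_mul hc, natDegree_pow]
  have hlow : (C a * p + C b).natDegree ≤ p.natDegree :=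
    (natDegree_add_le _ _).trans (max_le (natDegree_C_mul_le a p) (by simp))
  rw [add_assoc, natDegree_add_eq_left_of_natDegree_lt (by nlinarith), hlead]

end Polynomial

theorem stmt_17_general (m : ℕ) (hm : 2 ≤ m) (a c : ℝ)
    (p q : Polynomial ℝ)
    (hcop : IsCoprime p q)
    (hp : 1 ≤ p.natDegree)
    (hid : X * q ^ (m - 1) * (derivative p * q - p * derivative q) =
      -C c * p ^ (m + 1) + C a * p * q ^ m - q ^ (m + 1)) :
    c = 0 := by
  by_contra hc
  obtain ⟨k, rfl⟩ : ∃ k, m = k + 2 := ⟨m - 2, by omega⟩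
  rw [show k + 2 - 1 = k + 1 from rfl] at hid
  have hdvd : q ∣ C c * p ^ (k + 3) :=
    ⟨-(X * q ^ k * (derivative p * q - p * derivative q)) + C a * p * q ^ (k + 1) - q ^ (k + 2),
      by linear_combination hid⟩
  have hq_const : q.natDegree = 0 := by
    simpa using natDegree_le_of_dvd (hcop.symm.pow_right.dvd_of_dvd_mul_right hdvd)
      (C_ne_zero.2 hc)
  obtain ⟨b, rfl⟩ := natDegree_eq_zero.mp hq_const
  have hdeg : (k + 3) * p.natDegree ≤ p.natDegree :=
    calc (k + 3) * p.natDegree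
        = (C (-c) * p ^ (k + 3) + C (a * b ^ (k + 2)) * p + C (-b ^ (k + 3))).natDegree :=
          (natDegree_C_mul_pow_add_C_mul_add_C (by omega) hp _ _ (neg_ne_zero.2 hc)).symm
      _ = (C (b ^ (k + 1) * b) * (X * derivative p)).natDegree := by
          congr 1
          simp only [map_neg, map_mul, map_pow]
          simp only [derivative_C, mul_zero, sub_zero] at hid
          linear_combination -hid
      _ ≤ p.natDegree := (natDegree_C_mul_le _ _).trans (natDegree_X_mul_derivative_le p)
  nlinarith

/-- if coprime real polynomials p, q with q ≠ 0 and deg p ≥ 1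
satisfy X·q^{m−1}·(p'·q − p·q') = −c·p^{m+1} + a·p·q^m − q^{m+1}, then c = 0. -/
theorem stmt_17 (m : ℕ) (hm : 2 ≤ m) (a c : ℝ)
    (p q : Polynomial ℝ)
    (hcop : IsCoprime p q)
    (hq : q ≠ 0)
    (hp : 1 ≤ p.natDegree)
    (hid : X * q ^ (m - 1) * (derivative p * q - p * derivative q) =
      -C c * p ^ (m + 1) + C a * p * q ^ m - q ^ (m + 1)) :
    c = 0 :=
  stmt_17_general m hm a c p q hcop hp hid
end

section
/- Let n ≥ 1 be an integer and λ ∈ ℝ. Let φ : (−1,1) → ℝ be a positive, real analytic, even function, and define y(r) = 2/(n+2) − r·φ'(r)/φ(r) for r ∈ (−1,1). Assume: (i) (y(r) − 2λ/(n+2))^n · y'(r) = 2^{n+2}·r·φ(r)^{−(n+2)} for all r ∈ (−1,1); (ii) y'(r) > 0 for all r ∈ (0,1); and (iii) y(r) → +∞ as r → 1⁻. Then λ < 1. -/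
open Set Filter Topology

/-!
Suppose `λ ≥ 1` and put `m = 2λ/(n+2) ≥ y 0`. The right-hand side of the ODE is positive on
`(0,1)`, so `y` never takes the value `m` there. If `λ > 1` this contradicts the intermediate
value theorem, since `y 0 < m` and `y → ∞` at `1`. If `λ = 1`, then `m = y 0`, and `y` is even,
so `y' 0 = 0`; dividing the ODE by `r` and letting `r → 0`, the left side tends to `0` while the
right side tends to `2^(n+2) φ(0)^(-(n+2)) > 0`.
-/

theorem exists_mem_Ioo_eq_of_tendsto_atTop {a b m : ℝ} {f : ℝ → ℝ} (hab : a < b)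
    (hf : ContinuousOn f (Ico a b)) (ha : f a < m) (hlim : Tendsto f (𝓝[<] b) atTop) :
    ∃ r ∈ Ioo a b, f r = m := by
  obtain ⟨t, hmt, ht⟩ := ((hlim.eventually_gt_atTop m).and (Ioo_mem_nhdsLT hab)).exists
  obtain ⟨r, hr, rfl⟩ :=
    intermediate_value_Ioo ht.1.le (hf.mono (Icc_subset_Ico_right ht.2)) ⟨ha, hmt⟩
  exact ⟨r, Ioo_subset_Ioo_right ht.2.le hr, rfl⟩

theorem deriv_eq_neg_deriv_neg_of_eventuallyEq {f : ℝ → ℝ} {r : ℝ}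
    (h : (fun x => f (-x)) =ᶠ[𝓝 r] f) : deriv f r = -deriv f (-r) := by
  rw [← h.deriv_eq, deriv_comp_neg]

theorem deriv_eq_zero_of_eventuallyEq_comp_neg {f : ℝ → ℝ}
    (h : (fun x => f (-x)) =ᶠ[𝓝 0] f) : deriv f 0 = 0 := by
  have := deriv_eq_neg_deriv_neg_of_eventuallyEq h
  rw [neg_zero] at this
  linarith

theorem tendsto_sub_pow_mul_deriv_div_self {f : ℝ → ℝ} {n : ℕ} (hn : n ≠ 0)
    (hf : ContinuousAt f 0) (hf' : DifferentiableAt ℝ (deriv f) 0) (h0 : deriv f 0 = 0) :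
    Tendsto (fun r => (f r - f 0) ^ n * deriv f r / r) (𝓝[≠] 0) (𝓝 0) := by
  have hpow : Tendsto (fun r => (f r - f 0) ^ n) (𝓝[≠] 0) (𝓝 0) := by
    have : ContinuousAt (fun r => (f r - f 0) ^ n) 0 := (hf.sub continuousAt_const).pow n
    simpa [zero_pow hn] using this.tendsto.mono_left nhdsWithin_le_nhds
  have hslope : Tendsto (fun r => deriv f r / r) (𝓝[≠] 0) (𝓝 (deriv (deriv f) 0)) := by
    refine (hasDerivAt_iff_tendsto_slope.1 hf'.hasDerivAt).congr fun r => ?_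
    simp [slope_def_field, h0]
  simpa [mul_div_assoc] using hpow.mul hslope

theorem not_eventually_sub_pow_mul_deriv_eq_mul {f g : ℝ → ℝ} {n : ℕ} (hn : n ≠ 0)
    (hf : ContinuousAt f 0) (hf' : DifferentiableAt ℝ (deriv f) 0) (h0 : deriv f 0 = 0)
    (hg : ContinuousAt g 0) (hg0 : g 0 ≠ 0) :
    ¬∀ᶠ r in 𝓝 0, (f r - f 0) ^ n * deriv f r = r * g r := by
  intro h
  have hg' : Tendsto (fun r => (f r - f 0) ^ n * deriv f r / r) (𝓝[≠] 0) (𝓝 (g 0)) := by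
    refine (hg.tendsto.mono_left nhdsWithin_le_nhds).congr' ?_
    filter_upwards [nhdsWithin_le_nhds h, self_mem_nhdsWithin] with r hr hr0
    rw [hr, mul_div_cancel_left₀ _ hr0]
  exact hg0 (tendsto_nhds_unique hg' (tendsto_sub_pow_mul_deriv_div_self hn hf hf' h0))

theorem neg_mul_deriv_div_eq_of_even_on {φ : ℝ → ℝ} {s : Set ℝ} (hs : IsOpen s)
    (heven : ∀ r ∈ s, φ (-r) = φ r) :
    ∀ r ∈ s, -r * deriv φ (-r) / φ (-r) = r * deriv φ r / φ r := by
  intro r hr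
  have h : (fun x => φ (-x)) =ᶠ[𝓝 r] φ := eventually_of_mem (hs.mem_nhds hr) heven
  rw [deriv_eq_neg_deriv_neg_of_eventuallyEq h, heven r hr]
  ring

theorem stmt_18_general (n : ℕ) (hn : 1 ≤ n) (lam : ℝ)
    (φ : ℝ → ℝ)
    (hφpos : ∀ r ∈ Ioo (-1 : ℝ) 1, 0 < φ r)
    (hφan : AnalyticOnNhd ℝ φ (Ioo (-1 : ℝ) 1))
    (hφeven : ∀ r ∈ Ioo (-1 : ℝ) 1, φ (-r) = φ r)
    (y : ℝ → ℝ)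
    (hy : ∀ r : ℝ, y r = 2 / ((n : ℝ) + 2) - r * deriv φ r / φ r)
    (hODE : ∀ r ∈ Ioo (-1 : ℝ) 1,
      (y r - 2 * lam / ((n : ℝ) + 2)) ^ n * deriv y r =
        2 ^ (n + 2) * r * φ r ^ (-((n : ℤ) + 2)))
    (hylim : Tendsto y (𝓝[<] (1 : ℝ)) atTop) :
    lam < 1 := by
  have hI : Ioo (-1 : ℝ) 1 ∈ 𝓝 0 := Ioo_mem_nhds (by norm_num) (by norm_num)
  have h0 : (0 : ℝ) ∈ Ioo (-1) 1 := mem_of_mem_nhds hI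
  have hyan : AnalyticOnNhd ℝ y (Ioo (-1) 1) := fun r hr => by
    rw [funext hy]
    exact analyticAt_const.sub
      ((analyticAt_id.mul (hφan.deriv r hr)).div (hφan r hr) (hφpos r hr).ne')
  have hy0 : y 0 = 2 / ((n : ℝ) + 2) := by simp [hy]
  by_contra! hlam
  rcases hlam.eq_or_lt with rfl | hlam
  · have hyeven : (fun r => y (-r)) =ᶠ[𝓝 0] y := by
      filter_upwards [hI] with r hr
      rw [hy, hy, neg_mul_deriv_div_eq_of_even_on isOpen_Ioo hφeven r hr]
    have hφ0 := hφpos 0 h0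
    refine not_eventually_sub_pow_mul_deriv_eq_mul
      (n := n) (g := fun r => 2 ^ (n + 2) * φ r ^ (-((n : ℤ) + 2))) (by omega)
      (hyan 0 h0).continuousAt (hyan.deriv 0 h0).differentiableAt
      (deriv_eq_zero_of_eventuallyEq_comp_neg hyeven)
      (continuousAt_const.mul ((hφan 0 h0).continuousAt.zpow₀ _ (Or.inl hφ0.ne')))
      (by positivity) ?_
    filter_upwards [hI] with r hr
    rw [hy0, mul_left_comm, ← mul_assoc, ← hODE r hr, mul_one]
  · have hy0_lt : y 0 < 2 * lam / ((n : ℝ) + 2) := by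
      rw [hy0]
      gcongr
      linarith
    obtain ⟨r, hr, hyr⟩ := exists_mem_Ioo_eq_of_tendsto_atTop zero_lt_one
      (hyan.continuousOn.mono (Ico_subset_Ioo_left (by norm_num))) hy0_lt hylim
    have hr' : r ∈ Ioo (-1 : ℝ) 1 := Ioo_subset_Ioo_left (by norm_num) hr
    have hode := hODE r hr'
    rw [hyr, sub_self, zero_pow (by omega), zero_mul] at hode
    have hφr := hφpos r hr'
    have hr0 := hr.1
    exact (by positivity : (0 : ℝ) < 2 ^ (n + 2) * r * φ r ^ (-((n : ℤ) + 2))).ne hode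

/-- if φ is positive, real analytic and even on (−1,1),
y(r) = 2/(n+2) − r·φ'/φ satisfies (y − 2λ/(n+2))ⁿ·y' = 2^{n+2}·r·φ^{−(n+2)},
y' > 0 on (0,1) and y → +∞ as r → 1⁻, then λ < 1. -/
theorem stmt_18 (n : ℕ) (hn : 1 ≤ n) (lam : ℝ)
    (φ : ℝ → ℝ)
    (hφpos : ∀ r ∈ Ioo (-1 : ℝ) 1, 0 < φ r)
    (hφan : AnalyticOnNhd ℝ φ (Ioo (-1 : ℝ) 1))
    (hφeven : ∀ r ∈ Ioo (-1 : ℝ) 1, φ (-r) = φ r)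
    (y : ℝ → ℝ)
    (hy : ∀ r : ℝ, y r = 2 / ((n : ℝ) + 2) - r * deriv φ r / φ r)
    (hODE : ∀ r ∈ Ioo (-1 : ℝ) 1,
      (y r - 2 * lam / ((n : ℝ) + 2)) ^ n * deriv y r =
        2 ^ (n + 2) * r * φ r ^ (-((n : ℤ) + 2)))
    (hy' : ∀ r ∈ Ioo (0 : ℝ) 1, 0 < deriv y r)
    (hylim : Tendsto y (𝓝[<] (1 : ℝ)) atTop) :
    lam < 1 :=
  stmt_18_general n hn lam φ hφpos hφan hφeven y hy hODE hylim
end
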